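/- arXiv:1111.5734 — 5 statements merged into one kernel-verified Lean document; each statement's English description precedes it below -/
import Mathlib

section
/- For every integer n ≥ 4 divisible by 4, there exists a 3-graph H of order n with minimum codegree δ2(H) ≥ n/2 − 2 that contains no K4^--factor. (Equivalently, t_2^3(n, K_4^3 − e) ≥ n/2 − 1.) -/
open Finset

variable {V : Type*} [Fintype V] [DecidableEq V]

/-- `E` is the edge set of a 3-uniform hypergraph: every edge has 3 vertices. -/
def IsThreeGraph (E : Finset (Finset V)) : Prop :=
  ∀ e ∈ E, e.card = 3

/-- The codegree of the pair `u, v`: the number of vertices `w` with `{u,v,w} ∈ E`. -/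
def deg (E : Finset (Finset V)) (u v : V) : ℕ :=
  (Finset.univ.filter fun w => ({u, v, w} : Finset V) ∈ E).card

/-- The minimum codegree `δ₂(H)`: the minimum of `deg u v` over pairs of distinct vertices. -/
noncomputable def delta2 (E : Finset (Finset V)) : ℕ :=
  sInf {d | ∃ u v : V, u ≠ v ∧ d = deg E u v}

/-- A 4-element vertex set `U` spans a copy of `K₄⁻ = K₄³ - e`: at least 3 of the
four 3-element subsets of `U` are edges. -/
def SpansK4m (E : Finset (Finset V)) (U : Finset V) : Prop :=
  U.card = 4 ∧ 3 ≤ ((U.powersetCard 3).filter (fun T => T ∈ E)).card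

/-- A 4-element vertex set `U` spans a copy of `K₄³`: all four 3-element subsets are edges. -/
def SpansK4 (E : Finset (Finset V)) (U : Finset V) : Prop :=
  U.card = 4 ∧ ∀ T ∈ U.powersetCard 3, T ∈ E

/-- The induced subgraph `H[S]` has a `K₄⁻`-factor: `S` is partitioned into
4-element sets, each spanning a copy of `K₄⁻`. -/
def FactorOn (E : Finset (Finset V)) (S : Finset V) : Prop :=
  ∃ P : Finset (Finset V),
    (∀ U ∈ P, U ⊆ S ∧ SpansK4m E U) ∧ ∀ v ∈ S, ∃! U, U ∈ P ∧ v ∈ U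

/-- `H` has a `K₄⁻`-factor. -/
def HasK4mFactor (E : Finset (Finset V)) : Prop :=
  FactorOn E Finset.univ

/-- `L(T)`: the set of vertices `v ∉ T` such that `T ∪ {v}` spans a copy of `K₄⁻`. -/
def Lset (E : Finset (Finset V)) (T : Finset V) : Set V :=
  {v | v ∉ T ∧ SpansK4m E (insert v T)}

/-- `S` is an `(x,y)`-connector of length `i`: `S` is disjoint from `{x,y}`,
`|S| = 4i - 1`, and both `H[S ∪ {x}]` and `H[S ∪ {y}]` have `K₄⁻`-factors. -/
def IsConnector (E : Finset (Finset V)) (i : ℕ) (x y : V) (S : Finset V) : Prop :=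
  x ≠ y ∧ x ∉ S ∧ y ∉ S ∧ S.card = 4 * i - 1 ∧
    FactorOn E (insert x S) ∧ FactorOn E (insert y S)

/-- `x` and `y` are `(i,η)`-close: there are at least `η · n^(4i-1)`
`(x,y)`-connectors of length `i`, where `n` is the order of `H`. -/
def Close (E : Finset (Finset V)) (i : ℕ) (η : ℝ) (x y : V) : Prop :=
  η * (Fintype.card V : ℝ) ^ (4 * i - 1) ≤
    (Set.ncard {S : Finset V | IsConnector E i x y S} : ℝ)

/-- `Ñ_{i,η}(x)`: the set of vertices `(i,η)`-close to `x`. -/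
def tildeN (E : Finset (Finset V)) (i : ℕ) (η : ℝ) (x : V) : Set V :=
  {y | Close E i η x y}

/-- A vertex set `U` is `(i,η)`-closed in `H`: every two distinct vertices of `U`
are `(i,η)`-close. -/
def ClosedIn (E : Finset (Finset V)) (i : ℕ) (η : ℝ) (U : Set V) : Prop :=
  ∀ x ∈ U, ∀ y ∈ U, x ≠ y → Close E i η x y

/-- `H` is `(i,η)`-closed. -/
def K4Closed (E : Finset (Finset V)) (i : ℕ) (η : ℝ) : Prop :=
  ClosedIn E i η Set.univ

/-- `(x, y, S)` is an `(X,Y)`-bridge of length `i`: `x ∈ X`, `y ∈ Y` and `S` is an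
`(x,y)`-connector of length `i`; for `i = 0` the bridges are `(u, u, ∅)` with `u ∈ X ∩ Y`. -/
def IsBridge (E : Finset (Finset V)) (i : ℕ) (X Y : Set V) (t : V × V × Finset V) : Prop :=
  t.1 ∈ X ∧ t.2.1 ∈ Y ∧
    (if i = 0 then t.1 = t.2.1 ∧ t.2.2 = ∅ else IsConnector E i t.1 t.2.1 t.2.2)

/-- The number of `(X,Y)`-bridges of length `i`. -/
noncomputable def numBridges (E : Finset (Finset V)) (i : ℕ) (X Y : Set V) : ℕ :=
  Set.ncard {t : V × V × Finset V | IsBridge E i X Y t}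

def Edg (A : Finset V) : Finset (Finset V) :=
  (Finset.univ.powersetCard 3).filter (fun T => Even ((T ∩ A).card))

lemma mem_Edg {A T : Finset V} : T ∈ Edg A ↔ T.card = 3 ∧ Even ((T ∩ A).card) := by
  simp [Edg, Finset.mem_powersetCard]

lemma powersetCard_eq_image {U : Finset V} (hU : U.card = 4) :
    U.powersetCard 3 = U.image U.erase := by
  ext T
  simp only [Finset.mem_powersetCard, Finset.mem_image]
  constructor
  · rintro ⟨hsub, hcard⟩
    have h1 : (U \ T).card = 1 := by rw [Finset.card_sdiff_of_subset hsub]; omega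
    obtain ⟨x, hx⟩ := Finset.card_eq_one.mp h1
    have hxU : x ∈ U \ T := hx ▸ Finset.mem_singleton_self x
    refine ⟨x, (Finset.mem_sdiff.mp hxU).1, ?_⟩
    rw [Finset.erase_eq, ← hx, Finset.sdiff_sdiff_eq_self hsub]
  · rintro ⟨x, hxU, rfl⟩
    exact ⟨Finset.erase_subset _ _, by rw [Finset.card_erase_of_mem hxU, hU]⟩

lemma spans_inter (A U : Finset V) (h : SpansK4m (Edg A) U) :
    (U ∩ A).card = 0 ∨ (U ∩ A).card = 3 := by
  obtain ⟨hU4, h3⟩ := h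
  have hk4 : (U ∩ A).card ≤ 4 := hU4 ▸ Finset.card_le_card Finset.inter_subset_left
  have hinj : Set.InjOn U.erase U := by
    intro x hx y hy hxy
    by_contra hne
    have hmem : y ∈ U.erase x := Finset.mem_erase.mpr ⟨fun h => hne h.symm, hy⟩
    rw [hxy] at hmem
    exact (Finset.mem_erase.mp hmem).1 rfl
  rw [powersetCard_eq_image hU4, Finset.filter_image,
    Finset.card_image_of_injOn (hinj.mono (Finset.coe_subset.mpr (Finset.filter_subset _ _)))] at h3
  have herase : ∀ x ∈ U, (U.erase x ∩ A).card
      = if x ∈ A then (U ∩ A).card - 1 else (U ∩ A).card := by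
    intro x hx
    have hEq : U.erase x ∩ A = (U ∩ A).erase x := by
      ext y
      simp only [Finset.mem_erase, Finset.mem_inter]
      tauto
    rw [hEq]
    by_cases hxA : x ∈ A
    · simp [hxA, Finset.card_erase_of_mem (Finset.mem_inter.mpr ⟨hx, hxA⟩)]
    · simp [hxA, Finset.erase_eq_of_notMem (fun hmem => hxA (Finset.mem_inter.mp hmem).2)]
  have hcond : ∀ x ∈ U, (U.erase x ∈ Edg A ↔ Even ((U.erase x ∩ A).card)) := by
    intro x hx
    rw [mem_Edg]
    simp [Finset.card_erase_of_mem hx, hU4]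
  by_cases hke : Even ((U ∩ A).card)
  · left
    have hcongr : ∀ x ∈ U, (U.erase x ∈ Edg A ↔ x ∉ A) := by
      intro x hx
      rw [hcond x hx, herase x hx]
      by_cases hxA : x ∈ A
      · have hk1 : 1 ≤ (U ∩ A).card :=
          Finset.card_pos.mpr ⟨x, Finset.mem_inter.mpr ⟨hx, hxA⟩⟩
        have hodd : ¬ Even ((U ∩ A).card - 1) := by
          rw [Nat.even_iff] at hke ⊢
          omega
        simp [hxA, hodd]
      · simp [hxA, hke]
    rw [Finset.filter_congr hcongr] at h3
    have hsplit := Finset.card_filter_add_card_filter_not (s := U) (p := fun x => x ∈ A)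
    rw [Finset.filter_mem_eq_inter, hU4] at hsplit
    rw [Nat.even_iff] at hke
    omega
  · right
    have hcongr : ∀ x ∈ U, (U.erase x ∈ Edg A ↔ x ∈ A) := by
      intro x hx
      rw [hcond x hx, herase x hx]
      by_cases hxA : x ∈ A
      · have hk1 : 1 ≤ (U ∩ A).card :=
          Finset.card_pos.mpr ⟨x, Finset.mem_inter.mpr ⟨hx, hxA⟩⟩
        have hev : Even ((U ∩ A).card - 1) := by
          rw [Nat.even_iff] at hke ⊢
          omega
        simp [hxA, hev]
      · simp [hxA, hke]
    rw [Finset.filter_congr hcongr, Finset.filter_mem_eq_inter] at h3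
    rw [Nat.even_iff] at hke
    omega

lemma edg_no_factor (A : Finset V) (hA : ¬ 3 ∣ A.card) : ¬ HasK4mFactor (Edg A) := by
  rintro ⟨P, hP1, hP2⟩
  have hdisj : ∀ x ∈ P, ∀ y ∈ P, x ≠ y → Disjoint (x ∩ A) (y ∩ A) := by
    intro x hx y hy hxy
    rw [Finset.disjoint_left]
    intro v hvx hvy
    obtain ⟨U, _, hUuniq⟩ := hP2 v (Finset.mem_univ v)
    have h1 := hUuniq x ⟨hx, (Finset.mem_inter.mp hvx).1⟩
    have h2 := hUuniq y ⟨hy, (Finset.mem_inter.mp hvy).1⟩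
    exact hxy (h1.trans h2.symm)
  have hcover : P.biUnion (fun U => U ∩ A) = A := by
    ext v
    simp only [Finset.mem_biUnion, Finset.mem_inter]
    constructor
    · rintro ⟨U, _, _, hvA⟩
      exact hvA
    · intro hvA
      obtain ⟨U, ⟨hUP, hvU⟩, _⟩ := hP2 v (Finset.mem_univ v)
      exact ⟨U, hUP, hvU, hvA⟩
  have hsum := Finset.card_biUnion hdisj
  rw [hcover] at hsum
  apply hA
  rw [hsum]
  refine Finset.dvd_sum fun U hU => ?_
  rcases spans_inter A U ((hP1 U hU).2) with h | h <;> omega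

lemma mem_Edg_of (A : Finset V) (u v w : V) (huv : u ≠ v) (huw : u ≠ w) (hvw : v ≠ w)
    (he : Even ((({u, v, w} : Finset V) ∩ A).card)) : ({u, v, w} : Finset V) ∈ Edg A :=
  mem_Edg.mpr ⟨Finset.card_eq_three.mpr ⟨u, v, w, huv, huw, hvw, rfl⟩, he⟩

lemma deg_ge_of (A : Finset V) (u v : V) (W : Finset V)
    (hW : ∀ w ∈ W, ({u, v, w} : Finset V) ∈ Edg A) : W.card ≤ deg (Edg A) u v := by
  apply Finset.card_le_card
  intro w hw
  exact Finset.mem_filter.mpr ⟨Finset.mem_univ _, hW w hw⟩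

lemma deg_ge (A : Finset V) (u v : V) (huv : u ≠ v) :
    min (A.card - 1) (Fintype.card V - A.card - 2) ≤ deg (Edg A) u v := by
  by_cases hu : u ∈ A <;> by_cases hv : v ∈ A
  · -- both in A: witnesses are the vertices outside A
    refine le_trans (min_le_right _ _) (le_trans ?_ (deg_ge_of A u v Aᶜ ?_))
    · rw [Finset.card_compl]
      omega
    · intro w hw
      have hwA : w ∉ A := Finset.mem_compl.mp hw
      have hwu : u ≠ w := fun h => hwA (h ▸ hu)
      have hwv : v ≠ w := fun h => hwA (h ▸ hv)
      refine mem_Edg_of A u v w huv hwu hwv ?_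
      have hEq : ({u, v, w} : Finset V) ∩ A = {u, v} := by
        ext y
        simp only [Finset.mem_inter, Finset.mem_insert, Finset.mem_singleton]
        constructor
        · rintro ⟨rfl | rfl | rfl, hyA⟩
          · exact Or.inl rfl
          · exact Or.inr rfl
          · exact absurd hyA hwA
        · rintro (rfl | rfl)
          · exact ⟨Or.inl rfl, hu⟩
          · exact ⟨Or.inr (Or.inl rfl), hv⟩
      rw [hEq, Finset.card_pair huv]
      exact ⟨1, rfl⟩
  · -- u ∈ A, v ∉ A
    refine le_trans (min_le_left _ _) (le_trans ?_ (deg_ge_of A u v (A.erase u) ?_))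
    · rw [Finset.card_erase_of_mem hu]
    · intro w hw
      obtain ⟨hwu, hwA⟩ := Finset.mem_erase.mp hw
      have hvw : v ≠ w := fun h => hv (h ▸ hwA)
      refine mem_Edg_of A u v w huv (fun h => hwu h.symm) hvw ?_
      have hEq : ({u, v, w} : Finset V) ∩ A = {u, w} := by
        ext y
        simp only [Finset.mem_inter, Finset.mem_insert, Finset.mem_singleton]
        constructor
        · rintro ⟨rfl | rfl | rfl, hyA⟩
          · exact Or.inl rfl
          · exact absurd hyA hv
          · exact Or.inr rfl
        · rintro (rfl | rfl)
          · exact ⟨Or.inl rfl, hu⟩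
          · exact ⟨Or.inr (Or.inr rfl), hwA⟩
      rw [hEq, Finset.card_pair (fun h => hwu h.symm)]
      exact ⟨1, rfl⟩
  · -- u ∉ A, v ∈ A
    refine le_trans (min_le_left _ _) (le_trans ?_ (deg_ge_of A u v (A.erase v) ?_))
    · rw [Finset.card_erase_of_mem hv]
    · intro w hw
      obtain ⟨hwv, hwA⟩ := Finset.mem_erase.mp hw
      have huw : u ≠ w := fun h => hu (h ▸ hwA)
      refine mem_Edg_of A u v w huv huw (fun h => hwv h.symm) ?_
      have hEq : ({u, v, w} : Finset V) ∩ A = {v, w} := by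
        ext y
        simp only [Finset.mem_inter, Finset.mem_insert, Finset.mem_singleton]
        constructor
        · rintro ⟨rfl | rfl | rfl, hyA⟩
          · exact absurd hyA hu
          · exact Or.inl rfl
          · exact Or.inr rfl
        · rintro (rfl | rfl)
          · exact ⟨Or.inr (Or.inl rfl), hv⟩
          · exact ⟨Or.inr (Or.inr rfl), hwA⟩
      rw [hEq, Finset.card_pair (fun h => hwv h.symm)]
      exact ⟨1, rfl⟩
  · -- both outside A
    refine le_trans (min_le_right _ _) (le_trans ?_ (deg_ge_of A u v ((Aᶜ.erase u).erase v) ?_))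
    · have hu' : u ∈ Aᶜ := Finset.mem_compl.mpr hu
      have hv' : v ∈ Aᶜ.erase u := Finset.mem_erase.mpr ⟨huv.symm, Finset.mem_compl.mpr hv⟩
      rw [Finset.card_erase_of_mem hv', Finset.card_erase_of_mem hu', Finset.card_compl]
      omega
    · intro w hw
      obtain ⟨hwv, hwu, hwA'⟩ := Finset.mem_erase.mp hw |>.imp id (Finset.mem_erase.mp ·)
      have hwA : w ∉ A := Finset.mem_compl.mp hwA'
      refine mem_Edg_of A u v w huv (fun h => hwu h.symm) (fun h => hwv h.symm) ?_
      have hEq : ({u, v, w} : Finset V) ∩ A = ∅ := by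
        ext y
        simp only [Finset.mem_inter, Finset.mem_insert, Finset.mem_singleton,
          Finset.notMem_empty, iff_false, not_and]
        rintro (rfl | rfl | rfl)
        · exact hu
        · exact hv
        · exact hwA
      rw [hEq, Finset.card_empty]
      exact ⟨0, rfl⟩

/-- For every integer `n ≥ 4` divisible by 4, there exists a 3-graph of order `n`
with minimum codegree at least `n/2 - 2` that contains no `K₄⁻`-factor. -/
theorem stmt_0 :
    ∀ n : ℕ, 4 ≤ n → 4 ∣ n →
      ∃ E : Finset (Finset (Fin n)), IsThreeGraph E ∧
        (∀ u v : Fin n, u ≠ v → (n : ℤ) / 2 - 2 ≤ (deg E u v : ℤ)) ∧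
        ¬ HasK4mFactor E := by
  intro n hn4 hdvd
  have hnm : n = 2 * (n / 2) := by omega
  set m := n / 2 with hm
  have hm2 : 2 ≤ m := by omega
  set a := if 3 ∣ m then m - 1 else m with ha
  have ha3 : ¬ 3 ∣ a := by
    by_cases h : 3 ∣ m
    · rw [ha, if_pos h]
      omega
    · rw [ha, if_neg h]
      omega
  have ham : m - 1 ≤ a ∧ a ≤ m := by
    by_cases h : 3 ∣ m
    · rw [ha, if_pos h]
      omega
    · rw [ha, if_neg h]
      omega
  have han : a < n := by omega
  set A : Finset (Fin n) := Finset.univ.filter (fun v => v.val < a) with hA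
  have hAcard : A.card = a := by
    have hEq : A = Finset.Iio (⟨a, han⟩ : Fin n) := by
      ext x
      simp [hA, Finset.mem_Iio, Fin.lt_def]
    rw [hEq, Fin.card_Iio]
  refine ⟨Edg A, ?_, ?_, ?_⟩
  · intro e he
    exact (mem_Edg.mp he).1
  · intro u v huv
    have h1 := deg_ge A u v huv
    rw [hAcard, Fintype.card_fin] at h1
    have h2 : m - 2 ≤ deg (Edg A) u v := le_trans (by omega) h1
    omega
  · exact edg_no_factor A (hAcard ▸ ha3)
end

section
/- Let i ≥ 1 be an integer and let η, ε > 0 be constants. Then there exist a constant η' > 0 and an integer n0 such that for every 3-graph H of order n ≥ n0 and every vertex x ∈ V: if |Ñ_{i,η}(x)| ≥ ε·n, then Ñ_{i,η}(x) ⊆ Ñ_{i+1,η'}(x). -/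
open Finset

variable {V : Type*} [Fintype V] [DecidableEq V]

lemma factor_part {E : Finset (Finset V)} {A : Finset V} (h : FactorOn E A) {v : V}
    (hv : v ∈ A) : ∃ U, U ⊆ A ∧ v ∈ U ∧ SpansK4m E U := by
  obtain ⟨P, h1, h2⟩ := h
  obtain ⟨U, ⟨hUP, hvU⟩, -⟩ := h2 v hv
  exact ⟨U, (h1 U hUP).1, hvU, (h1 U hUP).2⟩

open Classical in
noncomputable def partOf (E : Finset (Finset V)) (A : Finset V) (v : V) : Finset V :=
  if h : ∃ U, U ⊆ A ∧ v ∈ U ∧ SpansK4m E U then h.choose else ∅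

lemma partOf_spec {E : Finset (Finset V)} {A : Finset V} {v : V}
    (h : FactorOn E A) (hv : v ∈ A) :
    partOf E A v ⊆ A ∧ v ∈ partOf E A v ∧ SpansK4m E (partOf E A v) := by
  classical
  have h' := factor_part h hv
  rw [partOf]
  rw [dif_pos h']
  exact h'.choose_spec

lemma recover_set {S U : Finset V} {z : V} (hz : z ∉ S) (hU : U ⊆ insert z S) :
    S = (S \ U) ∪ U.erase z := by
  ext w
  simp only [Finset.mem_union, Finset.mem_sdiff, Finset.mem_erase]
  constructor
  · intro hw
    by_cases hwU : w ∈ U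
    · exact Or.inr ⟨fun h => hz (h ▸ hw), hwU⟩
    · exact Or.inl ⟨hw, hwU⟩
  · rintro (⟨hw, -⟩ | ⟨hne, hwU⟩)
    · exact hw
    · rcases Finset.mem_insert.1 (hU hwU) with h | h
      · exact absurd h hne
      · exact h

lemma ncard_setOf_eq_filter {α : Type*} [Fintype α] (p : α → Prop) [DecidablePred p] :
    Set.ncard {a | p a} = (Finset.univ.filter p).card := by
  rw [← Set.ncard_coe_finset]; congr 1; ext a; simp

lemma sum_le_card_pairs {α β : Type*} [Fintype β] [DecidableEq α] (s : Finset α)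
    (p : α → β → Prop) [∀ z, DecidablePred (p z)]
    [DecidablePred fun q : α × β => p q.1 q.2] :
    ∑ z ∈ s, ((Finset.univ : Finset β).filter (p z)).card ≤
      ((s ×ˢ (Finset.univ : Finset β)).filter (fun q => p q.1 q.2)).card := by
  rw [Finset.card_eq_sum_card_fiberwise (f := Prod.fst) (t := s)
    (fun q hq => (Finset.mem_product.1 (Finset.mem_filter.1 hq).1).1)]
  apply Finset.sum_le_sum
  intro z hz
  apply Finset.card_le_card_of_injOn (fun S => (z, S))
  · intro S hS
    simp only [Finset.mem_coe, Finset.mem_filter, Finset.mem_univ, true_and] at hS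
    rw [Finset.mem_coe, Finset.mem_filter, Finset.mem_filter, Finset.mem_product]
    exact ⟨⟨⟨hz, Finset.mem_univ _⟩, hS⟩, rfl⟩
  · intro a _ b _ h
    exact congrArg Prod.snd h

lemma card_superset_le (W : Finset V) (m : ℕ)
    [DecidablePred fun S : Finset V => W ⊆ S ∧ S.card = m] :
    ((Finset.univ : Finset (Finset V)).filter (fun S => W ⊆ S ∧ S.card = m)).card ≤
      (Fintype.card V).choose (m - W.card) := by
  classical
  rw [← Finset.card_univ (α := V), ← Finset.card_powersetCard]
  apply Finset.card_le_card_of_injOn (fun S => S \ W)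
  · intro S hS
    simp only [Finset.mem_coe, Finset.mem_filter, Finset.mem_univ, true_and] at hS
    rw [Finset.mem_coe, Finset.mem_powersetCard]
    exact ⟨Finset.subset_univ _, by rw [Finset.card_sdiff_of_subset hS.1, hS.2]⟩
  · intro S1 h1 S2 h2 h
    simp only [Finset.mem_coe, Finset.mem_filter, Finset.mem_univ, true_and] at h1 h2
    have := congrArg (· ∪ W) h
    simpa [Finset.sdiff_union_of_subset h1.1, Finset.sdiff_union_of_subset h2.1] using this

lemma stepA {E : Finset (Finset V)} {i : ℕ} (x y : V) (NF : Finset V) (hNFy : y ∉ NF)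
    [DecidablePred fun q : V × Finset V => IsConnector E i x q.1 q.2 ∧ y ∉ q.2]
    [DecidablePred fun U : Finset V => SpansK4m E U ∧ x ∉ U ∧ y ∉ U] :
    ((NF ×ˢ (Finset.univ : Finset (Finset V))).filter
        (fun q => IsConnector E i x q.1 q.2 ∧ y ∉ q.2)).card ≤
      (4 * (Fintype.card V) ^ (4 * i - 1 - 3)) *
        ((Finset.univ : Finset (Finset V)).filter
          (fun U => SpansK4m E U ∧ x ∉ U ∧ y ∉ U)).card := by
  classical
  apply Finset.card_le_mul_card_image_of_maps_to
    (f := fun q => partOf E (insert q.1 q.2) q.1)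
  · intro q hq
    rw [Finset.mem_filter] at hq
    obtain ⟨hqm, hconn, hyS⟩ := hq
    have hzNF : q.1 ∈ NF := (Finset.mem_product.1 hqm).1
    obtain ⟨hxz, hxS, hzS, hcard, hfx, hfz⟩ := hconn
    have spec := partOf_spec hfz (Finset.mem_insert_self q.1 q.2)
    simp only [Finset.mem_filter, Finset.mem_univ, true_and]
    refine ⟨spec.2.2, ?_, ?_⟩
    · intro hx
      rcases Finset.mem_insert.1 (spec.1 hx) with h | h
      · exact hxz h
      · exact hxS h
    · intro hy
      rcases Finset.mem_insert.1 (spec.1 hy) with h | h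
      · exact hNFy (h ▸ hzNF)
      · exact hyS h
  · intro U hU
    simp only [Finset.mem_filter, Finset.mem_univ, true_and] at hU
    obtain ⟨⟨hU4, -⟩, hxU, hyU⟩ := hU
    calc ((((NF ×ˢ Finset.univ).filter
            (fun q => IsConnector E i x q.1 q.2 ∧ y ∉ q.2)).filter
            (fun q => partOf E (insert q.1 q.2) q.1 = U)).card)
        ≤ (U ×ˢ (Finset.univ : Finset V).powersetCard (4 * i - 1 - 3)).card := by
          apply Finset.card_le_card_of_injOn (fun q => (q.1, q.2 \ U))
          · intro q hq
            rw [Finset.mem_coe, Finset.mem_filter, Finset.mem_filter] at hq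
            obtain ⟨⟨hqm, hconn, hyS⟩, hfq⟩ := hq
            obtain ⟨hxz, hxS, hzS, hcard, hfx, hfz⟩ := hconn
            have spec := partOf_spec hfz (Finset.mem_insert_self q.1 q.2)
            rw [hfq] at spec
            rw [Finset.mem_coe, Finset.mem_product, Finset.mem_powersetCard]
            refine ⟨spec.2.1, Finset.subset_univ _, ?_⟩
            have hint : q.2 ∩ U = U.erase q.1 := by
              ext w
              simp only [Finset.mem_inter, Finset.mem_erase]
              constructor
              · rintro ⟨hw2, hwU⟩
                exact ⟨fun h => hzS (h ▸ hw2), hwU⟩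
              · rintro ⟨hne, hwU⟩
                rcases Finset.mem_insert.1 (spec.1 hwU) with h | h
                · exact absurd h hne
                · exact ⟨h, hwU⟩
            show (q.2 \ U).card = _
            rw [← Finset.sdiff_inter_self_left, Finset.card_sdiff_of_subset Finset.inter_subset_left,
              hint, Finset.card_erase_of_mem spec.2.1, hU4, hcard]
          · intro q hq r hr h
            simp only [Finset.mem_coe, Finset.mem_filter] at hq hr
            obtain ⟨⟨hqm, hconn, hyS⟩, hfq⟩ := hq
            obtain ⟨⟨hrm, hconn', hyS'⟩, hfr⟩ := hr
            obtain ⟨h1, h2⟩ : q.1 = r.1 ∧ q.2 \ U = r.2 \ U := by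
              simpa using h
            have specq := partOf_spec hconn.2.2.2.2.2 (Finset.mem_insert_self q.1 q.2)
            have specr := partOf_spec hconn'.2.2.2.2.2 (Finset.mem_insert_self r.1 r.2)
            rw [hfq] at specq
            rw [hfr] at specr
            have eq2 : q.2 = r.2 := by
              rw [recover_set hconn.2.2.1 specq.1, recover_set hconn'.2.2.1 specr.1,
                h1, h2]
            exact Prod.ext h1 eq2
      _ = 4 * (Fintype.card V).choose (4 * i - 1 - 3) := by
          rw [Finset.card_product, Finset.card_powersetCard, Finset.card_univ, hU4]
      _ ≤ 4 * (Fintype.card V) ^ (4 * i - 1 - 3) :=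
          Nat.mul_le_mul_left _ (Nat.choose_le_pow _ _)
-- continuation: appended to cnt.lean for testing
lemma factorOn_union {E : Finset (Finset V)} {A U : Finset V}
    (hA : FactorOn E A) (hU : SpansK4m E U) (hd : Disjoint A U) :
    FactorOn E (A ∪ U) := by
  obtain ⟨P, h1, h2⟩ := hA
  refine ⟨insert U P, ?_, ?_⟩
  · intro W hW
    rcases Finset.mem_insert.1 hW with rfl | hW
    · exact ⟨Finset.subset_union_right, hU⟩
    · exact ⟨(h1 W hW).1.trans Finset.subset_union_left, (h1 W hW).2⟩
  · intro v hv
    rcases Finset.mem_union.1 hv with hvA | hvU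
    · obtain ⟨W, ⟨hWP, hvW⟩, huniq⟩ := h2 v hvA
      refine ⟨W, ⟨Finset.mem_insert_of_mem hWP, hvW⟩, ?_⟩
      rintro W' ⟨hW', hvW'⟩
      rcases Finset.mem_insert.1 hW' with h' | hW'
      · exact absurd (h' ▸ hvW') (Finset.disjoint_left.1 hd hvA)
      · exact huniq W' ⟨hW', hvW'⟩
    · refine ⟨U, ⟨Finset.mem_insert_self _ _, hvU⟩, ?_⟩
      rintro W' ⟨hW', hvW'⟩
      rcases Finset.mem_insert.1 hW' with h' | hW'
      · exact h'
      · exact absurd ((h1 W' hW').1 hvW') (Finset.disjoint_right.1 hd hvU)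

lemma connector_glue {E : Finset (Finset V)} {i : ℕ} (hi : 1 ≤ i) {x y : V} {S U : Finset V}
    (hS : IsConnector E i x y S) (hU : SpansK4m E U)
    (hd : Disjoint U (insert x (insert y S))) :
    IsConnector E (i + 1) x y (S ∪ U) := by
  obtain ⟨hxy, hxS, hyS, hcard, hfx, hfy⟩ := hS
  have hxU : x ∉ U := fun h => (Finset.disjoint_left.1 hd h (by simp)).elim
  have hyU : y ∉ U := fun h => (Finset.disjoint_left.1 hd h (by simp)).elim
  have hdSU : Disjoint S U :=
    (hd.mono_right (by intro w hw; simp [hw] : S ⊆ insert x (insert y S))).symm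
  refine ⟨hxy, by simp [hxS, hxU], by simp [hyS, hyU], ?_, ?_, ?_⟩
  · rw [Finset.card_union_of_disjoint hdSU, hcard, hU.1]; omega
  · rw [← Finset.insert_union]
    exact factorOn_union hfx hU (by rw [Finset.disjoint_insert_left]; exact ⟨hxU, hdSU⟩)
  · rw [← Finset.insert_union]
    exact factorOn_union hfy hU (by rw [Finset.disjoint_insert_left]; exact ⟨hyU, hdSU⟩)

lemma stepB {E : Finset (Finset V)} {i : ℕ} (hi : 1 ≤ i) (x y : V)
    [DecidablePred fun S : Finset V => IsConnector E i x y S]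
    [DecidablePred fun q : Finset V × Finset V => (SpansK4m E q.2 ∧ x ∉ q.2 ∧ y ∉ q.2) ∧
      Disjoint q.2 (insert x (insert y q.1))]
    [DecidablePred fun S' : Finset V => IsConnector E (i + 1) x y S'] :
    ((((Finset.univ : Finset (Finset V)).filter (fun S => IsConnector E i x y S)) ×ˢ
        (Finset.univ : Finset (Finset V))).filter
        (fun q => (SpansK4m E q.2 ∧ x ∉ q.2 ∧ y ∉ q.2) ∧
          Disjoint q.2 (insert x (insert y q.1)))).card ≤
      ((4 * i + 3).choose 4) *
        ((Finset.univ : Finset (Finset V)).filter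
          (fun S' => IsConnector E (i + 1) x y S')).card := by
  classical
  apply Finset.card_le_mul_card_image_of_maps_to (f := fun q => q.1 ∪ q.2)
  · intro q hq
    rw [Finset.mem_filter] at hq
    obtain ⟨hqm, ⟨hsp, hxU, hyU⟩, hdisj⟩ := hq
    have hconn : IsConnector E i x y q.1 :=
      (Finset.mem_filter.1 (Finset.mem_product.1 hqm).1).2
    rw [Finset.mem_filter]
    exact ⟨Finset.mem_univ _, connector_glue hi hconn hsp hdisj⟩
  · intro S' hS'
    have hcard : S'.card = 4 * (i + 1) - 1 := (Finset.mem_filter.1 hS').2.2.2.2.1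
    calc _ ≤ (S'.powersetCard 4).card := by
          apply Finset.card_le_card_of_injOn (fun q => q.2)
          · intro q hq
            rw [Finset.mem_coe, Finset.mem_filter, Finset.mem_filter] at hq
            obtain ⟨⟨hqm, ⟨hsp, hxU, hyU⟩, hdisj⟩, huni⟩ := hq
            rw [Finset.mem_coe, Finset.mem_powersetCard]
            exact ⟨huni ▸ Finset.subset_union_right, hsp.1⟩
          · intro q hq r hr h
            simp only [Finset.mem_coe, Finset.mem_filter] at hq hr
            obtain ⟨⟨hqm, ⟨hsp, hxU, hyU⟩, hdisj⟩, huni⟩ := hq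
            obtain ⟨⟨hrm, ⟨hsp', hxU', hyU'⟩, hdisj'⟩, huni'⟩ := hr
            have hd1 : Disjoint q.1 q.2 :=
              (hdisj.mono_right (by intro w hw; simp [hw] :
                q.1 ⊆ insert x (insert y q.1))).symm
            have hd2 : Disjoint r.1 r.2 :=
              (hdisj'.mono_right (by intro w hw; simp [hw] :
                r.1 ⊆ insert x (insert y r.1))).symm
            have e1 : q.1 = S' \ q.2 := by
              rw [← huni, Finset.union_sdiff_cancel_right hd1]
            have e2 : r.1 = S' \ r.2 := by
              rw [← huni', Finset.union_sdiff_cancel_right hd2]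
            have h2 : q.2 = r.2 := h
            exact Prod.ext (by rw [e1, e2, h2]) h2
      _ = (4 * i + 3).choose 4 := by
          rw [Finset.card_powersetCard, hcard,
            show 4 * (i + 1) - 1 = 4 * i + 3 from by omega]

lemma card_not_disjoint_le {F : Finset (Finset V)} (h4 : ∀ U ∈ F, U.card = 4) (W : Finset V)
    [DecidablePred fun U : Finset V => ¬ Disjoint U W] :
    (F.filter (fun U => ¬ Disjoint U W)).card ≤ W.card * (Fintype.card V).choose 3 := by
  classical
  rcases (F.filter (fun U => ¬ Disjoint U W)).eq_empty_or_nonempty with he | hne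
  · simp [he]
  · obtain ⟨U0, hU0⟩ := hne
    have hW0 : (U0 ∩ W).Nonempty :=
      Finset.not_disjoint_iff_nonempty_inter.1 (Finset.mem_filter.1 hU0).2
    have hne' : Nonempty V := ⟨hW0.choose⟩
    rw [← Finset.card_univ (α := V), ← Finset.card_powersetCard, ← Finset.card_product]
    apply Finset.card_le_card_of_injOn (fun U =>
      if h : (U ∩ W).Nonempty then (h.choose, U.erase h.choose)
      else (Classical.arbitrary V, ∅))
    · intro U hU
      rw [Finset.mem_coe, Finset.mem_filter] at hU
      have hn : (U ∩ W).Nonempty := Finset.not_disjoint_iff_nonempty_inter.1 hU.2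
      simp only [dif_pos hn]
      have hmin := hn.choose_spec
      rw [Finset.mem_inter] at hmin
      rw [Finset.mem_coe, Finset.mem_product, Finset.mem_powersetCard]
      exact ⟨hmin.2, Finset.subset_univ _, by
        rw [Finset.card_erase_of_mem hmin.1, h4 U hU.1]⟩
    · intro U hU U' hU' h
      simp only [Finset.mem_coe, Finset.mem_filter] at hU hU'
      have hn : (U ∩ W).Nonempty := Finset.not_disjoint_iff_nonempty_inter.1 hU.2
      have hn' : (U' ∩ W).Nonempty := Finset.not_disjoint_iff_nonempty_inter.1 hU'.2
      simp only [dif_pos hn, dif_pos hn'] at h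
      obtain ⟨h1, h2⟩ : hn.choose = hn'.choose ∧
          U.erase hn.choose = U'.erase hn'.choose := by
        exact ⟨congrArg Prod.fst h, congrArg Prod.snd h⟩
      have hmU : hn.choose ∈ U := (Finset.mem_inter.1 hn.choose_spec).1
      have hmU' : hn'.choose ∈ U' := (Finset.mem_inter.1 hn'.choose_spec).1
      rw [← Finset.insert_erase hmU, ← Finset.insert_erase hmU', h2, h1]

set_option maxHeartbeats 1000000 in
/-- for `i ≥ 1` and `η, ε > 0` there are `η' > 0` and `n₀` such that in every
3-graph of order `n ≥ n₀`, if `|Ñ_{i,η}(x)| ≥ ε·n` then `Ñ_{i,η}(x) ⊆ Ñ_{i+1,η'}(x)`. -/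
theorem stmt_5 :
    ∀ i : ℕ, 1 ≤ i → ∀ η ε : ℝ, 0 < η → 0 < ε →
      ∃ η' : ℝ, 0 < η' ∧ ∃ n0 : ℕ, ∀ n : ℕ, n0 ≤ n →
        ∀ E : Finset (Finset (Fin n)), IsThreeGraph E →
          ∀ x : Fin n, ε * (n : ℝ) ≤ ((tildeN E i η x).ncard : ℝ) →
            tildeN E i η x ⊆ tildeN E (i + 1) η' x := by
  intro i hi η ε hη hε
  have hKn : 0 < (4 * i + 3).choose 4 := Nat.choose_pos (by omega)
  have hK : (0:ℝ) < ((4 * i + 3).choose 4 : ℝ) := by exact_mod_cast hKn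
  refine ⟨ε * η ^ 2 / (32 * ((4 * i + 3).choose 4 : ℝ)),
    div_pos (by positivity) (by linarith), ?_⟩
  refine ⟨⌈2 / ε + 2 / η + 32 * (4 * (i:ℝ) + 1) / (ε * η)⌉₊ + 1, ?_⟩
  intro n hn E hE x hx y hy
  classical
  have hn1 : 0 < n := by omega
  have hN : (0:ℝ) < (n:ℝ) := by exact_mod_cast hn1
  have hceil : (2 / ε + 2 / η + 32 * (4 * (i:ℝ) + 1) / (ε * η)) ≤ (n:ℝ) := by
    calc (2 / ε + 2 / η + 32 * (4 * (i:ℝ) + 1) / (ε * η))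
        ≤ (⌈2 / ε + 2 / η + 32 * (4 * (i:ℝ) + 1) / (ε * η)⌉₊ : ℝ) := Nat.le_ceil _
      _ ≤ (n : ℝ) := by exact_mod_cast Nat.le_of_succ_le hn
  have hq1 : (0:ℝ) ≤ 2 / ε := by positivity
  have hq2 : (0:ℝ) ≤ 2 / η := by positivity
  have hq3 : (0:ℝ) ≤ 32 * (4 * (i:ℝ) + 1) / (ε * η) := by positivity
  have hNε : 2 / ε ≤ (n:ℝ) := by linarith
  have hNη : 2 / η ≤ (n:ℝ) := by linarith
  have hNb : 32 * (4 * (i:ℝ) + 1) / (ε * η) ≤ (n:ℝ) := by linarith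
  have h2εn : (2:ℝ) ≤ ε * n := by
    rw [div_le_iff₀ hε] at hNε; linarith [hNε]
  have h2ηn : (2:ℝ) ≤ η * n := by
    rw [div_le_iff₀ hη] at hNη; linarith [hNη]
  -- y is close to x
  have hyClose : Close E i η x y := hy
  -- counting conversions
  have hconv : ∀ (j : ℕ) (η₀ : ℝ) (z : Fin n), Close E j η₀ x z ↔
      η₀ * (n:ℝ) ^ (4 * j - 1) ≤
        (((Finset.univ.filter (fun S => IsConnector E j x z S)).card : ℕ) : ℝ) := by
    intro j η₀ z
    unfold Close
    rw [ncard_setOf_eq_filter, Fintype.card_fin]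
  have hyC : η * (n:ℝ) ^ (4 * i - 1) ≤
      (((Finset.univ.filter (fun S => IsConnector E i x y S)).card : ℕ) : ℝ) :=
    (hconv i η y).1 hyClose
  -- the neighborhood finset
  have hxc : ε * (n:ℝ) ≤
      (((Finset.univ.filter (fun z => Close E i η x z)).card : ℕ) : ℝ) := by
    have : (tildeN E i η x).ncard =
        (Finset.univ.filter (fun z => Close E i η x z)).card :=
      ncard_setOf_eq_filter (fun z => Close E i η x z)
    rw [this] at hx; exact hx
  have hymem : y ∈ Finset.univ.filter (fun z => Close E i η x z) :=
    Finset.mem_filter.2 ⟨Finset.mem_univ _, hyClose⟩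
  have hNFcard : ((Finset.univ.filter (fun z => Close E i η x z)).erase y).card + 1 =
      (Finset.univ.filter (fun z => Close E i η x z)).card := by
    rw [Finset.card_erase_of_mem hymem]
    have : 0 < (Finset.univ.filter (fun z => Close E i η x z)).card :=
      Finset.card_pos.2 ⟨y, hymem⟩
    omega
  have hNFc : ε / 2 * (n:ℝ) ≤
      (((Finset.univ.filter (fun z => Close E i η x z)).erase y).card : ℝ) := by
    have h1 : (((Finset.univ.filter (fun z => Close E i η x z)).erase y).card : ℝ) + 1 =
        ((Finset.univ.filter (fun z => Close E i η x z)).card : ℝ) := by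
      exact_mod_cast congrArg (Nat.cast (R := ℝ)) hNFcard
    linarith
  -- per-z lower bound on connectors avoiding y
  have hperz : ∀ z ∈ (Finset.univ.filter (fun z => Close E i η x z)).erase y,
      η / 2 * (n:ℝ) ^ (4 * i - 1) ≤
        (((Finset.univ.filter
          (fun S => IsConnector E i x z S ∧ y ∉ S)).card : ℕ) : ℝ) := by
    intro z hz
    have hCl : Close E i η x z := (Finset.mem_filter.1 (Finset.mem_erase.1 hz).2).2
    have hcz := (hconv i η z).1 hCl
    have hsplit :
        ((Finset.univ.filter (fun S => IsConnector E i x z S ∧ y ∉ S)).card) +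
        ((Finset.univ.filter (fun S => IsConnector E i x z S ∧ y ∈ S)).card) =
        (Finset.univ.filter (fun S => IsConnector E i x z S)).card := by
      rw [← Finset.filter_filter, ← Finset.filter_filter]
      rw [add_comm]
      exact Finset.card_filter_add_card_filter_not (p := fun S => y ∈ S)
    have hbadsub : (Finset.univ.filter (fun S => IsConnector E i x z S ∧ y ∈ S)) ⊆
        (Finset.univ.filter (fun S => ({y} : Finset (Fin n)) ⊆ S ∧ S.card = 4 * i - 1)) := by
      intro S hS
      rw [Finset.mem_filter] at hS ⊢
      exact ⟨hS.1, Finset.singleton_subset_iff.2 hS.2.2, hS.2.1.2.2.2.1⟩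
    have hbad : ((Finset.univ.filter
        (fun S => IsConnector E i x z S ∧ y ∈ S)).card) ≤ n ^ (4 * i - 1 - 1) := by
      calc _ ≤ (Finset.univ.filter
            (fun S => ({y} : Finset (Fin n)) ⊆ S ∧ S.card = 4 * i - 1)).card :=
            Finset.card_le_card hbadsub
        _ ≤ (Fintype.card (Fin n)).choose (4 * i - 1 - Finset.card {y}) :=
            card_superset_le _ _
        _ ≤ n ^ (4 * i - 1 - 1) := by
            rw [Fintype.card_fin, Finset.card_singleton]
            exact Nat.choose_le_pow _ _
    have hbadR : ((Finset.univ.filter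
        (fun S => IsConnector E i x z S ∧ y ∈ S)).card : ℝ) ≤
        η / 2 * (n:ℝ) ^ (4 * i - 1) := by
      have epow : ((n:ℝ)) ^ (4 * i - 1 - 1) * (n:ℝ) = (n:ℝ) ^ (4 * i - 1) := by
        rw [← pow_succ, show (4 * i - 1 - 1) + 1 = 4 * i - 1 from by omega]
      have h1 : (1:ℝ) ≤ η / 2 * n := by linarith
      calc ((Finset.univ.filter
            (fun S => IsConnector E i x z S ∧ y ∈ S)).card : ℝ)
          ≤ ((n:ℝ)) ^ (4 * i - 1 - 1) := by exact_mod_cast hbad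
        _ = 1 * (n:ℝ) ^ (4 * i - 1 - 1) := (one_mul _).symm
        _ ≤ (η / 2 * n) * (n:ℝ) ^ (4 * i - 1 - 1) :=
            mul_le_mul_of_nonneg_right h1 (pow_nonneg hN.le _)
        _ = η / 2 * ((n:ℝ) ^ (4 * i - 1 - 1) * (n:ℝ)) := by ring
        _ = η / 2 * (n:ℝ) ^ (4 * i - 1) := by rw [epow]
    have hsplitR : ((Finset.univ.filter
          (fun S => IsConnector E i x z S ∧ y ∉ S)).card : ℝ) +
        ((Finset.univ.filter (fun S => IsConnector E i x z S ∧ y ∈ S)).card : ℝ) =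
        ((Finset.univ.filter (fun S => IsConnector E i x z S)).card : ℝ) := by
      exact_mod_cast congrArg (Nat.cast (R := ℝ)) hsplit
    linarith
  -- summing over z and applying step A
  have hsumA : ((((Finset.univ.filter (fun z => Close E i η x z)).erase y).card : ℝ)) *
      (η / 2 * (n:ℝ) ^ (4 * i - 1)) ≤
      ((∑ z ∈ (Finset.univ.filter (fun z => Close E i η x z)).erase y,
        (Finset.univ.filter (fun S => IsConnector E i x z S ∧ y ∉ S)).card : ℕ) : ℝ) := by
    push_cast
    calc ((((Finset.univ.filter (fun z => Close E i η x z)).erase y).card : ℝ)) *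
        (η / 2 * (n:ℝ) ^ (4 * i - 1))
        = ∑ _z ∈ (Finset.univ.filter (fun z => Close E i η x z)).erase y,
            (η / 2 * (n:ℝ) ^ (4 * i - 1)) := by
          rw [Finset.sum_const, nsmul_eq_mul]
      _ ≤ ∑ z ∈ (Finset.univ.filter (fun z => Close E i η x z)).erase y,
            ((Finset.univ.filter
              (fun S => IsConnector E i x z S ∧ y ∉ S)).card : ℝ) :=
          Finset.sum_le_sum hperz
  have hA2 : (∑ z ∈ (Finset.univ.filter (fun z => Close E i η x z)).erase y,
        (Finset.univ.filter (fun S => IsConnector E i x z S ∧ y ∉ S)).card) ≤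
      (4 * n ^ (4 * i - 1 - 3)) *
        (Finset.univ.filter (fun U => SpansK4m E U ∧ x ∉ U ∧ y ∉ U)).card := by
    calc _ ≤ ((((Finset.univ.filter (fun z => Close E i η x z)).erase y) ×ˢ
          Finset.univ).filter (fun q => IsConnector E i x q.1 q.2 ∧ y ∉ q.2)).card :=
          sum_le_card_pairs _ _
      _ ≤ (4 * (Fintype.card (Fin n)) ^ (4 * i - 1 - 3)) *
          (Finset.univ.filter (fun U => SpansK4m E U ∧ x ∉ U ∧ y ∉ U)).card :=
          stepA x y _ (Finset.notMem_erase _ _)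
      _ = (4 * n ^ (4 * i - 1 - 3)) *
          (Finset.univ.filter (fun U => SpansK4m E U ∧ x ∉ U ∧ y ∉ U)).card := by
          rw [Fintype.card_fin]
  -- lower bound on number of K4-minus copies avoiding x, y
  have hT4 : ε * η / 16 * (n:ℝ) ^ 4 ≤
      ((Finset.univ.filter (fun U => SpansK4m E U ∧ x ∉ U ∧ y ∉ U)).card : ℝ) := by
    have hM : (0:ℝ) < (n:ℝ) ^ (4 * i - 1 - 3) := pow_pos hN _
    have e3 : (n:ℝ) ^ (4 * i - 1) = (n:ℝ) ^ (4 * i - 1 - 3) * (n:ℝ) ^ 3 := by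
      rw [← pow_add, show (4 * i - 1 - 3) + 3 = 4 * i - 1 from by omega]
    have hA2R : ((∑ z ∈ (Finset.univ.filter (fun z => Close E i η x z)).erase y,
          (Finset.univ.filter (fun S => IsConnector E i x z S ∧ y ∉ S)).card : ℕ) : ℝ) ≤
        (4 * (n:ℝ) ^ (4 * i - 1 - 3)) *
          ((Finset.univ.filter (fun U => SpansK4m E U ∧ x ∉ U ∧ y ∉ U)).card : ℝ) := by
      exact_mod_cast hA2
    have hstep : (ε / 2 * (n:ℝ)) * (η / 2 * (n:ℝ) ^ (4 * i - 1)) ≤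
        (4 * (n:ℝ) ^ (4 * i - 1 - 3)) *
          ((Finset.univ.filter (fun U => SpansK4m E U ∧ x ∉ U ∧ y ∉ U)).card : ℝ) := by
      have hmul := mul_le_mul_of_nonneg_right hNFc
        (by positivity : (0:ℝ) ≤ η / 2 * (n:ℝ) ^ (4 * i - 1))
      linarith
    have hrw : (ε / 2 * (n:ℝ)) * (η / 2 * (n:ℝ) ^ (4 * i - 1)) =
        ε * η / 16 * (n:ℝ) ^ 4 * (4 * (n:ℝ) ^ (4 * i - 1 - 3)) := by
      rw [e3]; ring
    rw [hrw] at hstep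
    have := le_of_mul_le_mul_right (by
      calc ε * η / 16 * (n:ℝ) ^ 4 * ((n:ℝ) ^ (4 * i - 1 - 3) * 4) =
          ε * η / 16 * (n:ℝ) ^ 4 * (4 * (n:ℝ) ^ (4 * i - 1 - 3)) := by ring
        _ ≤ (4 * (n:ℝ) ^ (4 * i - 1 - 3)) *
            ((Finset.univ.filter (fun U => SpansK4m E U ∧ x ∉ U ∧ y ∉ U)).card : ℝ) :=
            hstep
        _ = ((Finset.univ.filter
            (fun U => SpansK4m E U ∧ x ∉ U ∧ y ∉ U)).card : ℝ) *
            ((n:ℝ) ^ (4 * i - 1 - 3) * 4) := by ring) (by positivity)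
    exact this
  -- per-S lower bound on good pairs
  have hgood : ∀ S ∈ Finset.univ.filter (fun S => IsConnector E i x y S),
      ε * η / 32 * (n:ℝ) ^ 4 ≤
        ((Finset.univ.filter (fun U => (SpansK4m E U ∧ x ∉ U ∧ y ∉ U) ∧
          Disjoint U (insert x (insert y S)))).card : ℝ) := by
    intro S hS
    have hSconn : IsConnector E i x y S := (Finset.mem_filter.1 hS).2
    have hWc : (insert x (insert y S)).card ≤ 4 * i + 1 := by
      calc (insert x (insert y S)).card ≤ (insert y S).card + 1 := Finset.card_insert_le _ _
        _ ≤ S.card + 1 + 1 := by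
            have := Finset.card_insert_le y S; omega
        _ ≤ 4 * i + 1 := by rw [hSconn.2.2.2.1]; omega
    have h4 : ∀ U ∈ Finset.univ.filter (fun U => SpansK4m E U ∧ x ∉ U ∧ y ∉ U),
        U.card = 4 := fun U hU => (Finset.mem_filter.1 hU).2.1.1
    have hbadn : ((Finset.univ.filter (fun U => SpansK4m E U ∧ x ∉ U ∧ y ∉ U)).filter
        (fun U => ¬ Disjoint U (insert x (insert y S)))).card ≤ (4 * i + 1) * n ^ 3 := by
      calc _ ≤ (insert x (insert y S)).card * (Fintype.card (Fin n)).choose 3 :=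
            card_not_disjoint_le h4 _
        _ ≤ (4 * i + 1) * n ^ 3 := by
            rw [Fintype.card_fin]
            exact Nat.mul_le_mul hWc (Nat.choose_le_pow _ _)
    have hsplit2 : ((Finset.univ.filter (fun U => SpansK4m E U ∧ x ∉ U ∧ y ∉ U)).filter
          (fun U => Disjoint U (insert x (insert y S)))).card +
        ((Finset.univ.filter (fun U => SpansK4m E U ∧ x ∉ U ∧ y ∉ U)).filter
          (fun U => ¬ Disjoint U (insert x (insert y S)))).card =
        (Finset.univ.filter (fun U => SpansK4m E U ∧ x ∉ U ∧ y ∉ U)).card :=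
      Finset.card_filter_add_card_filter_not _
    have hbadR : (((Finset.univ.filter (fun U => SpansK4m E U ∧ x ∉ U ∧ y ∉ U)).filter
        (fun U => ¬ Disjoint U (insert x (insert y S)))).card : ℝ) ≤
        ε * η / 32 * (n:ℝ) ^ 4 := by
      have hc : (32 * (4 * (i:ℝ) + 1) / (ε * η)) * (ε * η / 32) = 4 * (i:ℝ) + 1 := by
        field_simp
      have h41 : (4 * (i:ℝ) + 1) ≤ (n:ℝ) * (ε * η / 32) := by
        rw [← hc]
        exact mul_le_mul_of_nonneg_right hNb (by positivity)
      calc (((Finset.univ.filter (fun U => SpansK4m E U ∧ x ∉ U ∧ y ∉ U)).filter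
            (fun U => ¬ Disjoint U (insert x (insert y S)))).card : ℝ)
          ≤ ((4 * i + 1) * n ^ 3 : ℕ) := by exact_mod_cast hbadn
        _ = (4 * (i:ℝ) + 1) * (n:ℝ) ^ 3 := by push_cast; ring
        _ ≤ ((n:ℝ) * (ε * η / 32)) * (n:ℝ) ^ 3 :=
            mul_le_mul_of_nonneg_right h41 (by positivity)
        _ = ε * η / 32 * (n:ℝ) ^ 4 := by ring
    have hsplit2R : (((Finset.univ.filter (fun U => SpansK4m E U ∧ x ∉ U ∧ y ∉ U)).filter
          (fun U => Disjoint U (insert x (insert y S)))).card : ℝ) +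
        (((Finset.univ.filter (fun U => SpansK4m E U ∧ x ∉ U ∧ y ∉ U)).filter
          (fun U => ¬ Disjoint U (insert x (insert y S)))).card : ℝ) =
        ((Finset.univ.filter (fun U => SpansK4m E U ∧ x ∉ U ∧ y ∉ U)).card : ℝ) := by
      exact_mod_cast congrArg (Nat.cast (R := ℝ)) hsplit2
    have hgf : (Finset.univ.filter (fun U => (SpansK4m E U ∧ x ∉ U ∧ y ∉ U) ∧
          Disjoint U (insert x (insert y S)))) =
        ((Finset.univ.filter (fun U => SpansK4m E U ∧ x ∉ U ∧ y ∉ U)).filter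
          (fun U => Disjoint U (insert x (insert y S)))) := by
      rw [Finset.filter_filter]
    rw [hgf]
    linarith
  -- sum over S, apply step B
  have hsumB : (((Finset.univ.filter (fun S => IsConnector E i x y S)).card : ℝ)) *
      (ε * η / 32 * (n:ℝ) ^ 4) ≤
      ((∑ S ∈ Finset.univ.filter (fun S => IsConnector E i x y S),
        (Finset.univ.filter (fun U => (SpansK4m E U ∧ x ∉ U ∧ y ∉ U) ∧
          Disjoint U (insert x (insert y S)))).card : ℕ) : ℝ) := by
    push_cast
    calc (((Finset.univ.filter (fun S => IsConnector E i x y S)).card : ℝ)) *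
        (ε * η / 32 * (n:ℝ) ^ 4)
        = ∑ _S ∈ Finset.univ.filter (fun S => IsConnector E i x y S),
            (ε * η / 32 * (n:ℝ) ^ 4) := by rw [Finset.sum_const, nsmul_eq_mul]
      _ ≤ ∑ S ∈ Finset.univ.filter (fun S => IsConnector E i x y S),
            ((Finset.univ.filter (fun U => (SpansK4m E U ∧ x ∉ U ∧ y ∉ U) ∧
              Disjoint U (insert x (insert y S)))).card : ℝ) :=
          Finset.sum_le_sum hgood
  have hB2 : (∑ S ∈ Finset.univ.filter (fun S => IsConnector E i x y S),
        (Finset.univ.filter (fun U => (SpansK4m E U ∧ x ∉ U ∧ y ∉ U) ∧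
          Disjoint U (insert x (insert y S)))).card) ≤
      ((4 * i + 3).choose 4) *
        (Finset.univ.filter (fun S' => IsConnector E (i + 1) x y S')).card := by
    calc _ ≤ (((Finset.univ.filter (fun S => IsConnector E i x y S)) ×ˢ
          Finset.univ).filter (fun q => (SpansK4m E q.2 ∧ x ∉ q.2 ∧ y ∉ q.2) ∧
            Disjoint q.2 (insert x (insert y q.1)))).card := sum_le_card_pairs _ _
      _ ≤ ((4 * i + 3).choose 4) *
          (Finset.univ.filter (fun S' => IsConnector E (i + 1) x y S')).card :=
          stepB hi x y
  -- conclusion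
  show Close E (i + 1) (ε * η ^ 2 / (32 * ((4 * i + 3).choose 4 : ℝ))) x y
  unfold Close
  rw [ncard_setOf_eq_filter, Fintype.card_fin]
  have e2 : (n:ℝ) ^ (4 * (i + 1) - 1) = (n:ℝ) ^ (4 * i - 1) * (n:ℝ) ^ 4 := by
    rw [← pow_add, show (4 * i - 1) + 4 = 4 * (i + 1) - 1 from by omega]
  rw [e2]
  have hB2R : ((∑ S ∈ Finset.univ.filter (fun S => IsConnector E i x y S),
        (Finset.univ.filter (fun U => (SpansK4m E U ∧ x ∉ U ∧ y ∉ U) ∧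
          Disjoint U (insert x (insert y S)))).card : ℕ) : ℝ) ≤
      (((4 * i + 3).choose 4 : ℝ)) *
        ((Finset.univ.filter (fun S' => IsConnector E (i + 1) x y S')).card : ℝ) := by
    exact_mod_cast hB2
  have hchain : (η * (n:ℝ) ^ (4 * i - 1)) * (ε * η / 32 * (n:ℝ) ^ 4) ≤
      (((4 * i + 3).choose 4 : ℝ)) *
        ((Finset.univ.filter (fun S' => IsConnector E (i + 1) x y S')).card : ℝ) := by
    have hmul := mul_le_mul_of_nonneg_right hyC
      (by positivity : (0:ℝ) ≤ ε * η / 32 * (n:ℝ) ^ 4)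
    linarith
  rw [div_mul_eq_mul_div, div_le_iff₀ (by linarith : (0:ℝ) < 32 * ((4 * i + 3).choose 4 : ℝ))]
  nlinarith [hchain]
end

section
/- Let i ≥ 1 be an integer, let η > 0 be a constant, and set m = 12i. Then there is an integer n0 such that for every 3-graph H of order n ≥ n0 that is (i,η)-closed and for every 4-element set T ⊆ V(H), the number of absorbing m-sets for T is at least (η/2)^4 · (n choose m). -/
set_option linter.unusedSectionVars false
set_option maxHeartbeats 2000000


open Finset

variable {V : Type*} [Fintype V] [DecidableEq V]

/-- `A` is an absorbing `m`-set for `T`: `|A| = m`, `A ∩ T = ∅`, and both `H[A]` and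
`H[A ∪ T]` contain `K₄⁻`-factors. -/
def Absorbing (E : Finset (Finset V)) (m : ℕ) (T A : Finset V) : Prop :=
  A.card = m ∧ Disjoint A T ∧ FactorOn E A ∧ FactorOn E (A ∪ T)

-- batch 1
lemma factorOn_spans {E : Finset (Finset V)} {U : Finset V} (h : SpansK4m E U) :
    FactorOn E U := by
  refine ⟨{U}, ?_, ?_⟩
  · intro W hW; simp only [mem_singleton] at hW; subst hW; exact ⟨subset_rfl, h⟩
  · intro v hv
    refine ⟨U, ⟨mem_singleton_self U, hv⟩, ?_⟩
    rintro W ⟨hW, -⟩; simpa using hW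

lemma factorOn_union_s9 {E : Finset (Finset V)} {S₁ S₂ : Finset V} (hd : Disjoint S₁ S₂)
    (h₁ : FactorOn E S₁) (h₂ : FactorOn E S₂) : FactorOn E (S₁ ∪ S₂) := by
  obtain ⟨P₁, hP₁, hu₁⟩ := h₁
  obtain ⟨P₂, hP₂, hu₂⟩ := h₂
  refine ⟨P₁ ∪ P₂, ?_, ?_⟩
  · intro U hU
    rcases mem_union.1 hU with h | h
    · exact ⟨(hP₁ U h).1.trans subset_union_left, (hP₁ U h).2⟩
    · exact ⟨(hP₂ U h).1.trans subset_union_right, (hP₂ U h).2⟩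
  · intro v hv
    rcases mem_union.1 hv with hv₁ | hv₂
    · obtain ⟨U, ⟨hUP, hvU⟩, huniq⟩ := hu₁ v hv₁
      refine ⟨U, ⟨mem_union_left _ hUP, hvU⟩, ?_⟩
      rintro W ⟨hWP, hvW⟩
      rcases mem_union.1 hWP with h | h
      · exact huniq W ⟨h, hvW⟩
      · exact absurd ((hP₂ W h).1 hvW) (disjoint_left.1 hd hv₁)
    · obtain ⟨U, ⟨hUP, hvU⟩, huniq⟩ := hu₂ v hv₂
      refine ⟨U, ⟨mem_union_right _ hUP, hvU⟩, ?_⟩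
      rintro W ⟨hWP, hvW⟩
      rcases mem_union.1 hWP with h | h
      · exact absurd ((hP₁ W h).1 hvW) (disjoint_right.1 hd hv₂)
      · exact huniq W ⟨h, hvW⟩

lemma factorOn_exists_part {E : Finset (Finset V)} {S : Finset V} (h : FactorOn E S)
    {v : V} (hv : v ∈ S) : ∃ U, U ⊆ S ∧ SpansK4m E U ∧ v ∈ U := by
  obtain ⟨P, hP, hu⟩ := h
  obtain ⟨U, ⟨hUP, hvU⟩, -⟩ := hu v hv
  exact ⟨U, (hP U hUP).1, (hP U hUP).2, hvU⟩


variable {α : Type*} {β : Type*} [DecidableEq α] [DecidableEq β]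

noncomputable def pairSet (s : Finset α) (f : α → Finset β) : Finset (α × β) :=
  s.biUnion fun a => (f a).image (Prod.mk a)

lemma mem_pairSet {s : Finset α} {f : α → Finset β} {p : α × β} :
    p ∈ pairSet s f ↔ p.1 ∈ s ∧ p.2 ∈ f p.1 := by
  rcases p with ⟨a, b⟩
  simp only [pairSet, mem_biUnion, mem_image, Prod.mk.injEq]
  constructor
  · rintro ⟨x, hx, y, hy, rfl, rfl⟩; exact ⟨hx, hy⟩
  · rintro ⟨h1, h2⟩; exact ⟨a, h1, b, h2, rfl, rfl⟩

lemma card_pairSet (s : Finset α) (f : α → Finset β) :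
    (pairSet s f).card = ∑ a ∈ s, (f a).card := by
  unfold pairSet
  rw [card_biUnion]
  · refine sum_congr rfl fun a _ => ?_
    exact card_image_of_injective _ (fun b b' h => (Prod.ext_iff.1 h).2)
  · intro x hx y hy hxy
    simp only [disjoint_left, mem_image]
    rintro p ⟨b, hb, rfl⟩ ⟨b', hb', h⟩
    exact hxy (congrArg Prod.fst h).symm

lemma le_card_pairSet_real (s : Finset α) (f : α → Finset β) (r : ℝ) (hr : 0 ≤ r)
    (h : ∀ a ∈ s, r ≤ ((f a).card : ℝ)) :
    (s.card : ℝ) * r ≤ ((pairSet s f).card : ℝ) := by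
  rw [card_pairSet]
  push_cast
  calc (s.card : ℝ) * r = ∑ _a ∈ s, r := by rw [sum_const, nsmul_eq_mul]
  _ ≤ ∑ a ∈ s, ((f a).card : ℝ) := sum_le_sum h

/-- number of `c`-sets containing a fixed `k`-set is at most `n^(c-k)` -/
lemma card_sets_with (c k : ℕ) (t : Finset V) (htk : t.card = k) (F : Finset (Finset V))
    (hF : ∀ S ∈ F, S.card = c ∧ t ⊆ S) : F.card ≤ (Fintype.card V) ^ (c - k) := by
  have : F.card ≤ ((univ : Finset V).powersetCard (c - k)).card := by
    apply card_le_card_of_injOn (fun S => S \ t)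
    · intro S hS
      simp only [mem_coe, mem_powersetCard]
      refine ⟨subset_univ _, ?_⟩
      rw [card_sdiff_of_subset (hF S hS).2, (hF S hS).1, htk]
    · intro S hS S' hS' hEq
      have h1 := sdiff_union_of_subset (hF S (by simpa using hS)).2
      have h2 := sdiff_union_of_subset (hF S' (by simpa using hS')).2
      have h3 : S \ t = S' \ t := hEq
      rw [← h1, ← h2, h3]
  refine this.trans ?_
  rw [card_powersetCard, card_univ]
  exact (Nat.choose_le_descFactorial _ _).trans (Nat.descFactorial_le_pow _ _)

/-- T.card = 4 decomposition -/
lemma card_eq_four' {T : Finset V} (h : T.card = 4) :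
    ∃ a b c d : V, a ≠ b ∧ a ≠ c ∧ a ≠ d ∧ b ≠ c ∧ b ≠ d ∧ c ≠ d ∧ T = {a, b, c, d} := by
  obtain ⟨a, t, hat, rfl, ht3⟩ := card_eq_succ.1 h
  obtain ⟨b, c, d, hbc, hbd, hcd, rfl⟩ := card_eq_three.1 ht3
  simp only [mem_insert, mem_singleton, not_or] at hat
  exact ⟨a, b, c, d, hat.1, hat.2.1, hat.2.2, hbc, hbd, hcd, rfl⟩

/-- numeric lemma -/
lemma numeric_NL (i : ℕ) (hi : 1 ≤ i) :
    (12 * i) ^ 3 * ((12 * i).choose (4 * i - 1) * (12 * i - (4 * i - 1)).choose (4 * i - 1))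
      ≤ Nat.factorial (12 * i) := by
  obtain ⟨j, hj⟩ : ∃ j, 4 * i - 1 = j + 3 := ⟨4 * i - 4, by omega⟩
  set c := 4 * i - 1 with hc
  have hm : 12 * i = c + (c + (c + 3)) := by omega
  have h1 : (12 * i).choose c * c.factorial * (12 * i - c).factorial = (12 * i).factorial :=
    Nat.choose_mul_factorial_mul_factorial (by omega)
  have h2 : (12 * i - c).choose c * c.factorial * (12 * i - c - c).factorial
      = (12 * i - c).factorial := Nat.choose_mul_factorial_mul_factorial (by omega)
  have key : (12 * i) ^ 3 ≤ c.factorial * c.factorial * (12 * i - c - c).factorial := by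
    have h3 : 12 * i - c - c = c + 3 := by omega
    rw [h3, hj]
    have hf : (j + 3).factorial ≥ 6 := by
      calc (6:ℕ) = Nat.factorial 3 := rfl
      _ ≤ (j+3).factorial := Nat.factorial_le (by omega)
    have hf6 : (j + 6).factorial = (j+6)*((j+5)*((j+4)*(j+3).factorial)) := by
      rw [Nat.factorial_succ (j+5), Nat.factorial_succ (j+4), Nat.factorial_succ (j+3)]
    have h12 : 12 * i = j + 4 + ((j+4)+(j+4)) := by omega
    calc (12 * i) ^ 3 = (j+4)*(j+4)*(j+4)*27 := by rw [h12]; ring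
    _ ≤ 6 * (6 * ((j+6)*((j+5)*((j+4)*6)))) := by nlinarith
    _ ≤ (j+3).factorial * ((j+3).factorial * ((j+6)*((j+5)*((j+4)*(j+3).factorial)))) := by
        have := hf
        gcongr <;> omega
    _ = (j+3).factorial * (j+3).factorial * (j+6).factorial := by rw [hf6]; ring
  calc (12 * i) ^ 3 * ((12 * i).choose c * (12 * i - c).choose c)
      ≤ (c.factorial * c.factorial * (12 * i - c - c).factorial) *
        ((12 * i).choose c * (12 * i - c).choose c) := by
        exact Nat.mul_le_mul_right _ key
  _ = (12 * i).choose c * c.factorial * ((12 * i - c).choose c * c.factorial *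
        (12 * i - c - c).factorial) := by ring
  _ = (12 * i).factorial := by rw [h2, h1]


lemma witness_absorbing (E : Finset (Finset V)) (i : ℕ) (hi : 1 ≤ i)
    (T : Finset V) (u1 u2 u3 u4 : V) (hT : T = {u1, u2, u3, u4})
    (hu12 : u1 ≠ u2) (hu13 : u1 ≠ u3) (hu14 : u1 ≠ u4)
    (hu23 : u2 ≠ u3) (hu24 : u2 ≠ u4) (hu34 : u3 ≠ u4)
    (x1 x2 x3 : V) (S1 S2 S3 : Finset V)
    (h12 : x1 ≠ x2) (h13 : x1 ≠ x3) (h23 : x2 ≠ x3)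
    (hx1T : x1 ∉ T) (hx2T : x2 ∉ T) (hx3T : x3 ∉ T)
    (hspan : SpansK4m E (insert u4 {x1, x2, x3}))
    (hc1 : IsConnector E i u1 x1 S1) (hd1 : Disjoint S1 (T ∪ {x1, x2, x3}))
    (hc2 : IsConnector E i u2 x2 S2) (hd2 : Disjoint S2 (T ∪ {x1, x2, x3} ∪ S1))
    (hc3 : IsConnector E i u3 x3 S3) (hd3 : Disjoint S3 (T ∪ {x1, x2, x3} ∪ S1 ∪ S2)) :
    Absorbing E (12 * i) T ({x1, x2, x3} ∪ S1 ∪ S2 ∪ S3) := by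
  obtain ⟨-, hu1S1, hx1S1, hS1c, hf1u, hf1x⟩ := hc1
  obtain ⟨-, hu2S2, hx2S2, hS2c, hf2u, hf2x⟩ := hc2
  obtain ⟨-, hu3S3, hx3S3, hS3c, hf3u, hf3x⟩ := hc3
  have hS1T : Disjoint S1 T := (disjoint_union_right.1 hd1).1
  have hS1X : Disjoint S1 ({x1, x2, x3} : Finset V) := (disjoint_union_right.1 hd1).2
  have hS2T : Disjoint S2 T := (disjoint_union_right.1 (disjoint_union_right.1 hd2).1).1
  have hS2X : Disjoint S2 ({x1, x2, x3} : Finset V) :=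
    (disjoint_union_right.1 (disjoint_union_right.1 hd2).1).2
  have hS2S1 : Disjoint S2 S1 := (disjoint_union_right.1 hd2).2
  have hS3T : Disjoint S3 T :=
    (disjoint_union_right.1 (disjoint_union_right.1 (disjoint_union_right.1 hd3).1).1).1
  have hS3X : Disjoint S3 ({x1, x2, x3} : Finset V) :=
    (disjoint_union_right.1 (disjoint_union_right.1 (disjoint_union_right.1 hd3).1).1).2
  have hS3S1 : Disjoint S3 S1 := (disjoint_union_right.1 (disjoint_union_right.1 hd3).1).2
  have hS3S2 : Disjoint S3 S2 := (disjoint_union_right.1 hd3).2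
  -- membership facts
  have hx1X : x1 ∈ ({x1, x2, x3} : Finset V) := by simp
  have hx2X : x2 ∈ ({x1, x2, x3} : Finset V) := by simp
  have hx3X : x3 ∈ ({x1, x2, x3} : Finset V) := by simp
  have hu1T : u1 ∈ T := by rw [hT]; simp
  have hu2T : u2 ∈ T := by rw [hT]; simp
  have hu3T : u3 ∈ T := by rw [hT]; simp
  have hu4T : u4 ∈ T := by rw [hT]; simp
  have hu1x1 : u1 ≠ x1 := fun h => hx1T (h ▸ hu1T)
  have hu1x2 : u1 ≠ x2 := fun h => hx2T (h ▸ hu1T)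
  have hu1x3 : u1 ≠ x3 := fun h => hx3T (h ▸ hu1T)
  have hu2x1 : u2 ≠ x1 := fun h => hx1T (h ▸ hu2T)
  have hu2x2 : u2 ≠ x2 := fun h => hx2T (h ▸ hu2T)
  have hu2x3 : u2 ≠ x3 := fun h => hx3T (h ▸ hu2T)
  have hu3x1 : u3 ≠ x1 := fun h => hx1T (h ▸ hu3T)
  have hu3x2 : u3 ≠ x2 := fun h => hx2T (h ▸ hu3T)
  have hu3x3 : u3 ≠ x3 := fun h => hx3T (h ▸ hu3T)
  have hXcard : ({x1, x2, x3} : Finset V).card = 3 := card_eq_three.2 ⟨x1, x2, x3, h12, h13, h23, rfl⟩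
  have hXT : Disjoint ({x1, x2, x3} : Finset V) T := by
    simp only [disjoint_left, mem_insert, mem_singleton]
    rintro a (rfl | rfl | rfl) <;> assumption
  -- cards
  have hdXS1 : Disjoint ({x1, x2, x3} : Finset V) S1 := hS1X.symm
  have hdXS1S2 : Disjoint ({x1, x2, x3} ∪ S1) S2 := by
    rw [disjoint_union_left]; exact ⟨hS2X.symm, hS2S1.symm⟩
  have hdXS1S2S3 : Disjoint ({x1, x2, x3} ∪ S1 ∪ S2) S3 := by
    rw [disjoint_union_left, disjoint_union_left]
    exact ⟨⟨hS3X.symm, hS3S1.symm⟩, hS3S2.symm⟩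
  have hAcard : ({x1, x2, x3} ∪ S1 ∪ S2 ∪ S3).card = 12 * i := by
    rw [card_union_of_disjoint hdXS1S2S3, card_union_of_disjoint hdXS1S2,
      card_union_of_disjoint hdXS1, hXcard, hS1c, hS2c, hS3c]
    omega
  have hAT : Disjoint ({x1, x2, x3} ∪ S1 ∪ S2 ∪ S3) T := by
    rw [disjoint_union_left, disjoint_union_left, disjoint_union_left]
    exact ⟨⟨⟨hXT, hS1T⟩, hS2T⟩, hS3T⟩
  refine ⟨hAcard, hAT, ?_, ?_⟩
  · -- FactorOn A
    have hAeq : {x1, x2, x3} ∪ S1 ∪ S2 ∪ S3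
        = (insert x1 S1) ∪ ((insert x2 S2) ∪ (insert x3 S3)) := by
      simp only [Finset.insert_eq]
      ext a
      simp only [mem_union, mem_singleton]
      tauto
    rw [hAeq]
    have hd23 : Disjoint (insert x2 S2) (insert x3 S3) := by
      rw [disjoint_insert_left, disjoint_insert_right]
      refine ⟨?_, fun h => (disjoint_left.1 hS2X) h hx3X, hS3S2.symm⟩
      simp only [mem_insert]
      push_neg
      exact ⟨h23, fun h => (disjoint_left.1 hS3X) h hx2X⟩
    have hd123 : Disjoint (insert x1 S1) ((insert x2 S2) ∪ (insert x3 S3)) := by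
      rw [disjoint_union_right, disjoint_insert_left, disjoint_insert_left,
        disjoint_insert_right, disjoint_insert_right]
      refine ⟨⟨?_, fun h => (disjoint_left.1 hS1X) h hx2X, hS2S1.symm⟩,
        ?_, fun h => (disjoint_left.1 hS1X) h hx3X, hS3S1.symm⟩
      · simp only [mem_insert]; push_neg
        exact ⟨h12, fun h => (disjoint_left.1 hS2X) h hx1X⟩
      · simp only [mem_insert]; push_neg
        exact ⟨h13, fun h => (disjoint_left.1 hS3X) h hx1X⟩
    exact factorOn_union_s9 hd123 hf1x (factorOn_union_s9 hd23 hf2x hf3x)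
  · -- FactorOn (A ∪ T)
    have hATeq : {x1, x2, x3} ∪ S1 ∪ S2 ∪ S3 ∪ T
        = (insert u1 S1) ∪ ((insert u2 S2) ∪ ((insert u3 S3) ∪ (insert u4 {x1, x2, x3}))) := by
      rw [hT]
      simp only [Finset.insert_eq]
      ext a
      simp only [mem_union, mem_singleton]
      tauto
    rw [hATeq]
    have hu1S2 : u1 ∉ S2 := fun h => (disjoint_left.1 hS2T) h hu1T
    have hu1S3 : u1 ∉ S3 := fun h => (disjoint_left.1 hS3T) h hu1T
    have hu2S1 : u2 ∉ S1 := fun h => (disjoint_left.1 hS1T) h hu2T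
    have hu2S3 : u2 ∉ S3 := fun h => (disjoint_left.1 hS3T) h hu2T
    have hu3S1 : u3 ∉ S1 := fun h => (disjoint_left.1 hS1T) h hu3T
    have hu3S2 : u3 ∉ S2 := fun h => (disjoint_left.1 hS2T) h hu3T
    have hu4S1 : u4 ∉ S1 := fun h => (disjoint_left.1 hS1T) h hu4T
    have hu4S2 : u4 ∉ S2 := fun h => (disjoint_left.1 hS2T) h hu4T
    have hu4S3 : u4 ∉ S3 := fun h => (disjoint_left.1 hS3T) h hu4T
    have hu1X : u1 ∉ ({x1, x2, x3} : Finset V) := fun h => (disjoint_right.1 hXT) hu1T h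
    have hu2X : u2 ∉ ({x1, x2, x3} : Finset V) := fun h => (disjoint_right.1 hXT) hu2T h
    have hu3X : u3 ∉ ({x1, x2, x3} : Finset V) := fun h => (disjoint_right.1 hXT) hu3T h
    have hd34 : Disjoint (insert u3 S3) (insert u4 ({x1, x2, x3} : Finset V)) := by
      rw [disjoint_insert_left, disjoint_insert_right]
      refine ⟨?_, hu4S3, hS3X⟩
      simp only [mem_insert, mem_singleton]; push_neg
      exact ⟨hu34, hu3x1, hu3x2, hu3x3⟩
    have hd234 : Disjoint (insert u2 S2)
        ((insert u3 S3) ∪ (insert u4 ({x1, x2, x3} : Finset V))) := by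
      rw [disjoint_union_right, disjoint_insert_left, disjoint_insert_left,
        disjoint_insert_right, disjoint_insert_right]
      refine ⟨⟨?_, hu3S2, hS3S2.symm⟩, ?_, hu4S2, hS2X⟩
      · simp only [mem_insert]; push_neg
        exact ⟨hu23, hu2S3⟩
      · simp only [mem_insert, mem_singleton]; push_neg
        exact ⟨hu24, hu2x1, hu2x2, hu2x3⟩
    have hd1234 : Disjoint (insert u1 S1)
        ((insert u2 S2) ∪ ((insert u3 S3) ∪ (insert u4 ({x1, x2, x3} : Finset V)))) := by
      rw [disjoint_union_right, disjoint_union_right, disjoint_insert_left,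
        disjoint_insert_left, disjoint_insert_left, disjoint_insert_right,
        disjoint_insert_right, disjoint_insert_right]
      refine ⟨⟨?_, hu2S1, hS2S1.symm⟩, ⟨?_, hu3S1, hS3S1.symm⟩, ?_, hu4S1, hS1X⟩
      · simp only [mem_insert]; push_neg
        exact ⟨hu12, hu1S2⟩
      · simp only [mem_insert]; push_neg
        exact ⟨hu13, hu1S3⟩
      · simp only [mem_insert, mem_singleton]; push_neg
        exact ⟨hu14, hu1x1, hu1x2, hu1x3⟩
    exact factorOn_union_s9 hd1234 hf1u
      (factorOn_union_s9 hd234 hf2u (factorOn_union_s9 hd34 hf3u (factorOn_spans hspan)))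


-- connector sets
open scoped Classical in
noncomputable def connSet (E : Finset (Finset V)) (i : ℕ) (a b : V) : Finset (Finset V) :=
  univ.filter (fun S => IsConnector E i a b S)

lemma mem_connSet {E : Finset (Finset V)} {i : ℕ} {a b : V} {S : Finset V} :
    S ∈ connSet E i a b ↔ IsConnector E i a b S := by
  classical
  rw [connSet, mem_filter]
  simp

lemma connSet_card {E : Finset (Finset V)} {i : ℕ} {η : ℝ} {a b : V}
    (h : Close E i η a b) :
    η * (Fintype.card V : ℝ) ^ (4 * i - 1) ≤ ((connSet E i a b).card : ℝ) := by
  classical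
  have hset : {S : Finset V | IsConnector E i a b S} = ((connSet E i a b : Finset _) : Set _) := by
    ext S
    simp [mem_connSet]
  unfold Close at h
  rwa [hset, Set.ncard_coe_finset] at h

/-- lower bound for connectors avoiding a forbidden set -/
lemma connD_lower {E : Finset (Finset V)} {i : ℕ} {η : ℝ} {a b : V}
    (hclose : Close E i η a b) (F : Finset V)
    [DecidablePred (fun S : Finset V => Disjoint S F)] :
    η * (Fintype.card V : ℝ) ^ (4 * i - 1)
      - (F.card : ℝ) * (Fintype.card V : ℝ) ^ (4 * i - 1 - 1)
      ≤ (((connSet E i a b).filter (fun S => Disjoint S F)).card : ℝ) := by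
  classical
  have hsplit := card_filter_add_card_filter_not (s := connSet E i a b)
    (p := fun S => Disjoint S F)
  have hbadsub : (connSet E i a b).filter (fun S => ¬ Disjoint S F) ⊆
      F.biUnion (fun v => (connSet E i a b).filter (fun S => v ∈ S)) := by
    intro S hS
    rw [mem_filter] at hS
    obtain ⟨v, hvS, hvF⟩ := not_disjoint_iff.1 hS.2
    exact mem_biUnion.2 ⟨v, hvF, mem_filter.2 ⟨hS.1, hvS⟩⟩
  have hbad : ((connSet E i a b).filter (fun S => ¬ Disjoint S F)).card
      ≤ F.card * (Fintype.card V) ^ (4 * i - 1 - 1) := by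
    refine le_trans (card_le_card hbadsub) (le_trans card_biUnion_le ?_)
    have hone : ∀ v : V, ((connSet E i a b).filter (fun S => v ∈ S)).card
        ≤ (Fintype.card V) ^ (4 * i - 1 - 1) := by
      intro v
      exact card_sets_with (4 * i - 1) 1 {v} (card_singleton v) _ (fun S hS => by
        rw [mem_filter] at hS
        exact ⟨(mem_connSet.1 hS.1).2.2.2.1, singleton_subset_iff.2 hS.2⟩)
    calc ∑ v ∈ F, ((connSet E i a b).filter (fun S => v ∈ S)).card
        ≤ ∑ _v ∈ F, (Fintype.card V) ^ (4 * i - 1 - 1) := sum_le_sum (fun v _ => hone v)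
      _ = F.card * (Fintype.card V) ^ (4 * i - 1 - 1) := by rw [sum_const, smul_eq_mul]
  have hmain := connSet_card hclose
  have hbadR : (((connSet E i a b).filter (fun S => ¬ Disjoint S F)).card : ℝ)
      ≤ (F.card : ℝ) * (Fintype.card V : ℝ) ^ (4 * i - 1 - 1) := by exact_mod_cast hbad
  have hsplitR : (((connSet E i a b).filter (fun S => Disjoint S F)).card : ℝ)
      + (((connSet E i a b).filter (fun S => ¬ Disjoint S F)).card : ℝ)
      = ((connSet E i a b).card : ℝ) := by exact_mod_cast hsplit
  linarith

/-- extraction of spanning tuples from connectors -/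
lemma tuple_to_Xall (E : Finset (Finset V)) (i : ℕ) (η : ℝ) (u4 y : V)
    (hclose : Close E i η u4 y) :
    ∃ Xall : Finset (V × V × V),
      (∀ p ∈ Xall, (p.1 ≠ p.2.1 ∧ p.1 ≠ p.2.2 ∧ p.2.1 ≠ p.2.2) ∧
        SpansK4m E (insert u4 {p.1, p.2.1, p.2.2})) ∧
      η * (Fintype.card V : ℝ) ^ (4 * i - 1)
        ≤ ((Fintype.card V : ℝ) ^ (4 * i - 1 - 3)) * (Xall.card : ℝ) := by
  classical
  have hex : ∀ S : Finset V, ∃ p : V × V × V, S ∈ connSet E i u4 y →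
      (p.1 ≠ p.2.1 ∧ p.1 ≠ p.2.2 ∧ p.2.1 ≠ p.2.2) ∧
      SpansK4m E (insert u4 {p.1, p.2.1, p.2.2}) ∧
      ({p.1, p.2.1, p.2.2} : Finset V) ⊆ S := by
    intro S
    by_cases hS : S ∈ connSet E i u4 y
    · obtain ⟨hne, hu4S, hyS, hScard, hfu4, hfy⟩ := mem_connSet.1 hS
      obtain ⟨U, hUsub, hUspan, hu4U⟩ := factorOn_exists_part hfu4 (mem_insert_self u4 S)
      have ht3 : (U.erase u4).card = 3 := by rw [card_erase_of_mem hu4U, hUspan.1]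
      obtain ⟨a, b, c', hab, hac, hbc, habc⟩ := card_eq_three.1 ht3
      refine ⟨(a, b, c'), fun _ => ⟨⟨hab, hac, hbc⟩, ?_, ?_⟩⟩
      · have hins : insert u4 ({a, b, c'} : Finset V) = U := by
          rw [← habc, insert_erase hu4U]
        rw [hins]
        exact hUspan
      · rw [← habc]
        intro w hw
        rcases mem_insert.1 (hUsub (mem_of_mem_erase hw)) with h | h
        · exact absurd h (ne_of_mem_erase hw)
        · exact h
    · exact ⟨(u4, u4, u4), fun h => absurd h hS⟩
  choose f hf using hex
  refine ⟨(connSet E i u4 y).image f, ?_, ?_⟩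
  · intro p hp
    rw [mem_image] at hp
    obtain ⟨S, hS, hfS⟩ := hp
    obtain ⟨h1, h2, h3⟩ := hf S hS
    rw [hfS] at h1 h2
    exact ⟨h1, h2⟩
  · have hfib : (connSet E i u4 y).card
        ≤ (Fintype.card V) ^ (4 * i - 1 - 3) * ((connSet E i u4 y).image f).card := by
      apply card_le_mul_card_image
      intro p hp
      rw [mem_image] at hp
      obtain ⟨S0, hS0, hfS0⟩ := hp
      obtain ⟨hd, -, -⟩ := hf S0 hS0
      rw [hfS0] at hd
      have htc : ({p.1, p.2.1, p.2.2} : Finset V).card = 3 :=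
        card_eq_three.2 ⟨p.1, p.2.1, p.2.2, hd.1, hd.2.1, hd.2.2, rfl⟩
      refine card_sets_with (4 * i - 1) 3 {p.1, p.2.1, p.2.2} htc _ (fun S hS => ?_)
      rw [mem_filter] at hS
      obtain ⟨hS1, hS2⟩ := hS
      obtain ⟨-, -, hsub⟩ := hf S hS1
      rw [hS2] at hsub
      exact ⟨(mem_connSet.1 hS1).2.2.2.1, hsub⟩
    have hmain := connSet_card hclose
    have hfibR : ((connSet E i u4 y).card : ℝ)
        ≤ (Fintype.card V : ℝ) ^ (4 * i - 1 - 3) * (((connSet E i u4 y).image f).card : ℝ) := by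
      exact_mod_cast hfib
    linarith


/-- the absorbing-set map from witnesses -/
def gmap : (V × V × V) × (Finset V × (Finset V × Finset V)) → Finset V :=
  fun w => {w.1.1, w.1.2.1, w.1.2.2} ∪ w.2.1 ∪ w.2.2.1 ∪ w.2.2.2

/-- bad tuples (touching T) are few -/
lemma bad_tuples_bound (T : Finset V) (hT4 : T.card = 4) (Xall : Finset (V × V × V))
    [DecidablePred fun p : V × V × V => ¬(p.1 ∉ T ∧ p.2.1 ∉ T ∧ p.2.2 ∉ T)] :
    (Xall.filter (fun p => ¬(p.1 ∉ T ∧ p.2.1 ∉ T ∧ p.2.2 ∉ T))).card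
      ≤ 12 * (Fintype.card V) ^ 2 := by
  classical
  set N := Fintype.card V with hN
  have hbadsub : Xall.filter (fun p => ¬(p.1 ∉ T ∧ p.2.1 ∉ T ∧ p.2.2 ∉ T)) ⊆
      T.biUnion (fun v => (univ.filter (fun p : V × V × V => p.1 = v)) ∪
        (univ.filter (fun p => p.2.1 = v)) ∪ (univ.filter (fun p => p.2.2 = v))) := by
    intro p hp
    rw [mem_filter] at hp
    have hp2 := hp.2
    push_neg at hp2
    rw [mem_biUnion]
    by_cases h1 : p.1 ∈ T
    · exact ⟨p.1, h1, by simp⟩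
    by_cases h2 : p.2.1 ∈ T
    · exact ⟨p.2.1, h2, by simp⟩
    · exact ⟨p.2.2, hp2 h1 h2, by simp⟩
  have hsq : ((univ : Finset (V × V))).card = N ^ 2 := by
    simp [Fintype.card_prod, hN]
    ring
  have b1 : ∀ v : V, (univ.filter (fun p : V × V × V => p.1 = v)).card ≤ N ^ 2 := by
    intro v
    rw [← hsq]
    apply card_le_card_of_injOn (fun p : V × V × V => p.2) (fun p _ => mem_univ p.2)
    intro p hp q hq hpq
    simp only [coe_filter, Set.mem_setOf_eq] at hp hq
    exact Prod.ext (hp.2.trans hq.2.symm) hpq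
  have b2 : ∀ v : V, (univ.filter (fun p : V × V × V => p.2.1 = v)).card ≤ N ^ 2 := by
    intro v
    rw [← hsq]
    apply card_le_card_of_injOn (fun p : V × V × V => (p.1, p.2.2)) (fun p _ => mem_univ _)
    intro p hp q hq hpq
    simp only [coe_filter, Set.mem_setOf_eq] at hp hq
    simp only [Prod.mk.injEq] at hpq
    exact Prod.ext hpq.1 (Prod.ext (hp.2.trans hq.2.symm) hpq.2)
  have b3 : ∀ v : V, (univ.filter (fun p : V × V × V => p.2.2 = v)).card ≤ N ^ 2 := by
    intro v
    rw [← hsq]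
    apply card_le_card_of_injOn (fun p : V × V × V => (p.1, p.2.1)) (fun p _ => mem_univ _)
    intro p hp q hq hpq
    simp only [coe_filter, Set.mem_setOf_eq] at hp hq
    simp only [Prod.mk.injEq] at hpq
    exact Prod.ext hpq.1 (Prod.ext hpq.2 (hp.2.trans hq.2.symm))
  refine le_trans (card_le_card hbadsub) (le_trans card_biUnion_le ?_)
  have hslice : ∀ v : V, ((univ.filter (fun p : V × V × V => p.1 = v)) ∪
      (univ.filter (fun p => p.2.1 = v)) ∪ (univ.filter (fun p => p.2.2 = v))).card
      ≤ 3 * N ^ 2 := by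
    intro v
    refine le_trans (card_union_le _ _) (le_trans (Nat.add_le_add_right (card_union_le _ _) _) ?_)
    have := b1 v
    have := b2 v
    have := b3 v
    omega
  calc ∑ v ∈ T, ((univ.filter (fun p : V × V × V => p.1 = v)) ∪
      (univ.filter (fun p => p.2.1 = v)) ∪ (univ.filter (fun p => p.2.2 = v))).card
      ≤ ∑ _v ∈ T, 3 * N ^ 2 := sum_le_sum (fun v _ => hslice v)
    _ = 4 * (3 * N ^ 2) := by rw [sum_const, smul_eq_mul, hT4]
    _ = 12 * N ^ 2 := by ring

/-- the multiplicity (fiber) bound -/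
lemma fiber_bound (A : Finset V) (m c : ℕ) (hAm : A.card = m)
    (F : Finset ((V × V × V) × (Finset V × (Finset V × Finset V))))
    (hF : ∀ w ∈ F, gmap w = A ∧ w.2.1.card = c ∧ w.2.2.1.card = c ∧
      Disjoint w.2.2.1 w.2.1 ∧
      Disjoint w.2.2.2 ({w.1.1, w.1.2.1, w.1.2.2} ∪ w.2.1 ∪ w.2.2.1)) :
    F.card ≤ m ^ 3 * (m.choose c * (m - c).choose c) := by
  classical
  have htarget : ((A ×ˢ (A ×ˢ A)) ×ˢ
      pairSet (A.powersetCard c) (fun S1 => (A \ S1).powersetCard c)).card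
      = m ^ 3 * (m.choose c * (m - c).choose c) := by
    rw [card_product, card_product, card_pairSet]
    have hsum : ∀ S1 ∈ A.powersetCard c, ((A \ S1).powersetCard c).card = (m - c).choose c := by
      intro S1 hS1
      rw [mem_powersetCard] at hS1
      rw [card_powersetCard, card_sdiff_of_subset hS1.1, hS1.2, hAm]
    rw [sum_congr rfl hsum, sum_const, smul_eq_mul, card_powersetCard, card_product, hAm]
    ring
  rw [← htarget]
  apply card_le_card_of_injOn (fun w => ((w.1.1, (w.1.2.1, w.1.2.2)), (w.2.1, w.2.2.1)))
  · intro w hw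
    obtain ⟨hwA, hS1c, hS2c, hS2dS1, hS3d⟩ := hF w hw
    have hsubX : ({w.1.1, w.1.2.1, w.1.2.2} : Finset V) ⊆ A := by
      rw [← hwA, gmap]
      intro a ha
      exact mem_union_left _ (mem_union_left _ (mem_union_left _ ha))
    have hsubS1 : w.2.1 ⊆ A := by
      rw [← hwA, gmap]
      intro a ha
      exact mem_union_left _ (mem_union_left _ (mem_union_right _ ha))
    have hsubS2 : w.2.2.1 ⊆ A := by
      rw [← hwA, gmap]
      intro a ha
      exact mem_union_left _ (mem_union_right _ ha)
    rw [mem_coe, mem_product]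
    constructor
    · rw [mem_product]
      refine ⟨hsubX (by simp), ?_⟩
      rw [mem_product]
      exact ⟨hsubX (by simp), hsubX (by simp)⟩
    · rw [mem_pairSet]
      constructor
      · rw [mem_powersetCard]
        exact ⟨hsubS1, hS1c⟩
      · rw [mem_powersetCard]
        exact ⟨subset_sdiff.2 ⟨hsubS2, hS2dS1⟩, hS2c⟩
  · have hdet : ∀ v ∈ F,
        v.2.2.2 = A \ ({v.1.1, v.1.2.1, v.1.2.2} ∪ v.2.1 ∪ v.2.2.1) := by
      intro v hv
      obtain ⟨hvA, -, -, -, hS3d⟩ := hF v hv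
      ext a
      simp only [mem_sdiff]
      constructor
      · intro ha
        refine ⟨by rw [← hvA, gmap]; exact mem_union_right _ ha,
          fun hmem => (disjoint_left.1 hS3d) ha hmem⟩
      · rintro ⟨haA, hnot⟩
        rw [← hvA, gmap] at haA
        rcases mem_union.1 haA with h | h
        · exact absurd h hnot
        · exact h
    intro w hw w' hw' heq
    simp only [mem_coe] at hw hw'
    simp only [Prod.mk.injEq] at heq
    obtain ⟨⟨e1, e2, e3⟩, e4, e5⟩ := heq
    have h6 : w.2.2.2 = w'.2.2.2 := by
      rw [hdet w hw, hdet w' hw', e1, e2, e3, e4, e5]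
    exact Prod.ext (Prod.ext e1 (Prod.ext e2 e3)) (Prod.ext e4 (Prod.ext e5 h6))


/-- for `i ≥ 1`, `η > 0` and `m = 12i` there is `n₀` such that in every
`(i,η)`-closed 3-graph of order `n ≥ n₀`, every 4-element set `T` has at least
`(η/2)⁴·(n choose m)` absorbing `m`-sets. -/
theorem stmt_9 :
    ∀ i : ℕ, 1 ≤ i → ∀ η : ℝ, 0 < η →
      ∃ n0 : ℕ, ∀ n : ℕ, n0 ≤ n →
        ∀ E : Finset (Finset (Fin n)), IsThreeGraph E → K4Closed E i η →
          ∀ T : Finset (Fin n), T.card = 4 →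
            (η / 2) ^ 4 * (Nat.choose n (12 * i) : ℝ) ≤
              ((Set.ncard {A : Finset (Fin n) | Absorbing E (12 * i) T A}) : ℝ) := by
  intro i hi η hη
  refine ⟨max 2 (Nat.ceil ((2 * ((12 * i : ℕ) + 16 : ℝ)) / η)), ?_⟩
  intro n hn E hE hcl T hT4
  classical
  set m : ℕ := 12 * i with hm
  set c : ℕ := 4 * i - 1 with hc
  have hc3 : 3 ≤ c := by omega
  have hn2 : 2 ≤ n := le_trans (le_max_left _ _) hn
  have hnpos : 0 < n := by omega
  have hnR0 : (0 : ℝ) < (n : ℝ) := by exact_mod_cast hnpos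
  have hceil : (2 * ((m : ℝ) + 16)) / η ≤ (n : ℝ) := by
    have h1 : Nat.ceil ((2 * ((m : ℕ) + 16 : ℝ)) / η) ≤ n := le_trans (le_max_right _ _) hn
    exact Nat.ceil_le.1 h1
  have hkey : 2 * ((m : ℝ) + 16) ≤ η * n := by
    rw [div_le_iff₀ hη] at hceil
    nlinarith
  have hkey2 : (m : ℝ) + 16 ≤ η / 2 * n := by nlinarith
  obtain ⟨u1, u2, u3, u4, hu12, hu13, hu14, hu23, hu24, hu34, hTeq⟩ := card_eq_four' hT4
  have hu1T : u1 ∈ T := by rw [hTeq]; simp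
  have hu2T : u2 ∈ T := by rw [hTeq]; simp
  have hu3T : u3 ∈ T := by rw [hTeq]; simp
  have hu4T : u4 ∈ T := by rw [hTeq]; simp
  have hclosepair : ∀ a b : Fin n, a ≠ b → Close E i η a b :=
    fun a b hab => hcl a (Set.mem_univ a) b (Set.mem_univ b) hab
  -- connectors avoiding forbidden sets
  have hConnD : ∀ (a b : Fin n) (F : Finset (Fin n)), a ≠ b → F.card ≤ m + 16 →
      η / 2 * (n : ℝ) ^ c ≤ (((connSet E i a b).filter (fun S => Disjoint S F)).card : ℝ) := by
    intro a b F hab hF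
    have h := connD_lower (hclosepair a b hab) F
    rw [Fintype.card_fin] at h
    have hFC : (F.card : ℝ) ≤ (m : ℝ) + 16 := by exact_mod_cast hF
    have hpow : (n : ℝ) ^ c = (n : ℝ) ^ (c - 1) * n := by
      rw [← pow_succ]
      congr 1
      omega
    have hp1 : (0 : ℝ) ≤ (n : ℝ) ^ (c - 1) := by positivity
    have hsmall : (F.card : ℝ) * (n : ℝ) ^ (c - 1) ≤ η / 2 * (n : ℝ) ^ c := by
      rw [hpow]
      calc (F.card : ℝ) * (n : ℝ) ^ (c - 1) ≤ ((m : ℝ) + 16) * (n : ℝ) ^ (c - 1) := by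
            exact mul_le_mul_of_nonneg_right hFC hp1
      _ = (n : ℝ) ^ (c - 1) * ((m : ℝ) + 16) := by ring
      _ ≤ (n : ℝ) ^ (c - 1) * (η / 2 * n) := mul_le_mul_of_nonneg_left hkey2 hp1
      _ = η / 2 * ((n : ℝ) ^ (c - 1) * n) := by ring
    have hcc : 4 * i - 1 = c := by omega
    have hcc1 : 4 * i - 1 - 1 = c - 1 := by omega
    rw [hcc, hcc1] at h
    linarith
  -- extract good tuples
  obtain ⟨y, hy⟩ := Fintype.exists_ne_of_one_lt_card (by rw [Fintype.card_fin]; omega) u4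
  obtain ⟨Xall, hXallP, hXallB⟩ := tuple_to_Xall E i η u4 y (hclosepair u4 y hy.symm)
  rw [Fintype.card_fin] at hXallB
  have hXallCard : η * (n : ℝ) ^ 3 ≤ (Xall.card : ℝ) := by
    have hpow : (n : ℝ) ^ (4 * i - 1) = (n : ℝ) ^ (4 * i - 1 - 3) * (n : ℝ) ^ 3 := by
      rw [← pow_add]
      congr 1
      omega
    have hp3 : (0 : ℝ) < (n : ℝ) ^ (4 * i - 1 - 3) := by positivity
    nlinarith [pow_pos hnR0 3]
  set GoodX : Finset (Fin n × Fin n × Fin n) :=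
    Xall.filter (fun p => p.1 ∉ T ∧ p.2.1 ∉ T ∧ p.2.2 ∉ T) with hGoodX
  have hGoodXCard : η / 2 * (n : ℝ) ^ 3 ≤ (GoodX.card : ℝ) := by
    have hsplit := card_filter_add_card_filter_not (s := Xall)
      (p := fun p : Fin n × Fin n × Fin n => p.1 ∉ T ∧ p.2.1 ∉ T ∧ p.2.2 ∉ T)
    have hbad := bad_tuples_bound T hT4 Xall
    rw [Fintype.card_fin] at hbad
    have hbadR : ((Xall.filter (fun p => ¬(p.1 ∉ T ∧ p.2.1 ∉ T ∧ p.2.2 ∉ T))).card : ℝ)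
        ≤ 12 * (n : ℝ) ^ 2 := by exact_mod_cast hbad
    have hGX : (GoodX.card : ℝ) +
        ((Xall.filter (fun p => ¬(p.1 ∉ T ∧ p.2.1 ∉ T ∧ p.2.2 ∉ T))).card : ℝ)
        = (Xall.card : ℝ) := by
      rw [hGoodX]
      exact_mod_cast hsplit
    have h12n : (12 : ℝ) * (n : ℝ) ^ 2 ≤ η / 2 * (n : ℝ) ^ 3 := by
      have hm0 : (0 : ℝ) ≤ (m : ℝ) := Nat.cast_nonneg m
      have h12 : (12 : ℝ) ≤ η / 2 * n := by linarith
      nlinarith [sq_nonneg (n : ℝ)]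
    linarith
  -- the witness set
  set C1 : (Fin n × Fin n × Fin n) → Finset (Finset (Fin n)) :=
    fun p => (connSet E i u1 p.1).filter (fun S => Disjoint S (T ∪ {p.1, p.2.1, p.2.2})) with hC1
  set C2 : (Fin n × Fin n × Fin n) → Finset (Fin n) → Finset (Finset (Fin n)) :=
    fun p S1 => (connSet E i u2 p.2.1).filter
      (fun S => Disjoint S (T ∪ {p.1, p.2.1, p.2.2} ∪ S1)) with hC2
  set C3 : (Fin n × Fin n × Fin n) → Finset (Fin n) → Finset (Fin n) → Finset (Finset (Fin n)) :=
    fun p S1 S2 => (connSet E i u3 p.2.2).filter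
      (fun S => Disjoint S (T ∪ {p.1, p.2.1, p.2.2} ∪ S1 ∪ S2)) with hC3
  set W : Finset ((Fin n × Fin n × Fin n) × (Finset (Fin n) × (Finset (Fin n) × Finset (Fin n)))) :=
    pairSet GoodX (fun p => pairSet (C1 p) (fun S1 => pairSet (C2 p S1) (fun S2 => C3 p S1 S2)))
    with hW
  set r : ℝ := η / 2 * (n : ℝ) ^ c with hr
  have hr0 : 0 ≤ r := by rw [hr]; positivity
  have hXcard3 : ∀ p : Fin n × Fin n × Fin n, ({p.1, p.2.1, p.2.2} : Finset (Fin n)).card ≤ 3 := by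
    intro p
    refine le_trans (card_insert_le _ _) ?_
    have := card_insert_le p.2.1 ({p.2.2} : Finset (Fin n))
    simp only [card_singleton] at this
    omega
  have hGoodXmem : ∀ p ∈ GoodX, p ∈ Xall ∧ p.1 ∉ T ∧ p.2.1 ∉ T ∧ p.2.2 ∉ T := by
    intro p hp
    rw [hGoodX, mem_filter] at hp
    exact ⟨hp.1, hp.2⟩
  have hC1card : ∀ p ∈ GoodX, r ≤ ((C1 p).card : ℝ) := by
    intro p hp
    obtain ⟨-, hp1, -, -⟩ := hGoodXmem p hp
    refine hConnD u1 p.1 _ (fun h => hp1 (h ▸ hu1T)) ?_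
    refine le_trans (card_union_le _ _) ?_
    have := hXcard3 p
    omega
  have hC2card : ∀ p ∈ GoodX, ∀ S1 ∈ C1 p, r ≤ ((C2 p S1).card : ℝ) := by
    intro p hp S1 hS1
    obtain ⟨-, -, hp2, -⟩ := hGoodXmem p hp
    have hS1c : S1.card = c := by
      rw [hC1, mem_filter] at hS1
      exact (mem_connSet.1 hS1.1).2.2.2.1
    refine hConnD u2 p.2.1 _ (fun h => hp2 (h ▸ hu2T)) ?_
    refine le_trans (card_union_le _ _) ?_
    refine le_trans (Nat.add_le_add_right (card_union_le _ _) _) ?_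
    have := hXcard3 p
    omega
  have hC3card : ∀ p ∈ GoodX, ∀ S1 ∈ C1 p, ∀ S2 ∈ C2 p S1, r ≤ ((C3 p S1 S2).card : ℝ) := by
    intro p hp S1 hS1 S2 hS2
    obtain ⟨-, -, -, hp3⟩ := hGoodXmem p hp
    have hS1c : S1.card = c := by
      rw [hC1, mem_filter] at hS1
      exact (mem_connSet.1 hS1.1).2.2.2.1
    have hS2c : S2.card = c := by
      rw [hC2, mem_filter] at hS2
      exact (mem_connSet.1 hS2.1).2.2.2.1
    refine hConnD u3 p.2.2 _ (fun h => hp3 (h ▸ hu3T)) ?_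
    refine le_trans (card_union_le _ _) ?_
    refine le_trans (Nat.add_le_add_right (card_union_le _ _) _) ?_
    refine le_trans (Nat.add_le_add_right (Nat.add_le_add_right (card_union_le _ _) _) _) ?_
    have := hXcard3 p
    omega
  have hWcard : ((GoodX.card : ℝ)) * (r * (r * r)) ≤ (W.card : ℝ) := by
    rw [hW]
    refine le_card_pairSet_real _ _ _ (by positivity) ?_
    intro p hp
    calc r * (r * r) ≤ ((C1 p).card : ℝ) * (r * r) :=
          mul_le_mul_of_nonneg_right (hC1card p hp) (by positivity)
    _ ≤ _ := by
        refine le_card_pairSet_real _ _ _ (by positivity) ?_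
        intro S1 hS1
        calc r * r ≤ ((C2 p S1).card : ℝ) * r :=
              mul_le_mul_of_nonneg_right (hC2card p hp S1 hS1) hr0
        _ ≤ _ := le_card_pairSet_real _ _ _ hr0 (fun S2 hS2 => hC3card p hp S1 hS1 S2 hS2)
  have hWmem : ∀ w ∈ W, w.1 ∈ GoodX ∧ w.2.1 ∈ C1 w.1 ∧ w.2.2.1 ∈ C2 w.1 w.2.1 ∧
      w.2.2.2 ∈ C3 w.1 w.2.1 w.2.2.1 := by
    intro w hw
    rw [hW, mem_pairSet] at hw
    obtain ⟨h1, h2⟩ := hw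
    rw [mem_pairSet] at h2
    obtain ⟨h2, h3⟩ := h2
    rw [mem_pairSet] at h3
    exact ⟨h1, h2, h3.1, h3.2⟩
  have hAbsW : ∀ w ∈ W, Absorbing E m T (gmap w) := by
    intro w hw
    obtain ⟨hp, hS1, hS2, hS3⟩ := hWmem w hw
    obtain ⟨hpX, hp1T, hp2T, hp3T⟩ := hGoodXmem w.1 hp
    obtain ⟨⟨hd12, hd13, hd23⟩, hspan⟩ := hXallP w.1 hpX
    rw [hC1, mem_filter] at hS1
    rw [hC2, mem_filter] at hS2
    rw [hC3, mem_filter] at hS3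
    exact witness_absorbing E i hi T u1 u2 u3 u4 hTeq hu12 hu13 hu14 hu23 hu24 hu34
      w.1.1 w.1.2.1 w.1.2.2 w.2.1 w.2.2.1 w.2.2.2 hd12 hd13 hd23 hp1T hp2T hp3T hspan
      (mem_connSet.1 hS1.1) hS1.2 (mem_connSet.1 hS2.1) hS2.2 (mem_connSet.1 hS3.1) hS3.2
  -- multiplicity
  set M : ℕ := m ^ 3 * (m.choose c * (m - c).choose c) with hM
  have hfiber : ∀ A ∈ W.image gmap, (W.filter (fun w => gmap w = A)).card ≤ M := by
    intro A hA
    obtain ⟨w0, hw0W, hw0A⟩ := mem_image.1 hA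
    have hAm : A.card = m := by rw [← hw0A]; exact (hAbsW w0 hw0W).1
    rw [hM]
    refine fiber_bound A m c hAm _ ?_
    intro w hw
    rw [mem_filter] at hw
    obtain ⟨hwW, hwA⟩ := hw
    obtain ⟨hp, hS1, hS2, hS3⟩ := hWmem w hwW
    have hS1c : w.2.1.card = c := by
      rw [hC1, mem_filter] at hS1
      exact (mem_connSet.1 hS1.1).2.2.2.1
    have hS2c : w.2.2.1.card = c := by
      rw [hC2, mem_filter] at hS2
      exact (mem_connSet.1 hS2.1).2.2.2.1
    have hS2dS1 : Disjoint w.2.2.1 w.2.1 := by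
      rw [hC2, mem_filter] at hS2
      exact disjoint_of_subset_right subset_union_right hS2.2
    have hS3d : Disjoint w.2.2.2 ({w.1.1, w.1.2.1, w.1.2.2} ∪ w.2.1 ∪ w.2.2.1) := by
      rw [hC3, mem_filter] at hS3
      refine disjoint_of_subset_right ?_ hS3.2
      intro a ha
      simp only [mem_union] at ha ⊢
      tauto
    exact ⟨hwA, hS1c, hS2c, hS2dS1, hS3d⟩
  have hWle : W.card ≤ M * (W.image gmap).card := card_le_mul_card_image W M hfiber
  have himgsub : W.image gmap ⊆ univ.filter (fun A => Absorbing E m T A) := by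
    intro A hA
    obtain ⟨w0, hw0W, hw0A⟩ := mem_image.1 hA
    rw [mem_filter]
    exact ⟨mem_univ _, hw0A ▸ hAbsW w0 hw0W⟩
  have hgoalset : {A : Finset (Fin n) | Absorbing E m T A}.ncard
      = ((univ.filter (fun A => Absorbing E m T A)).card) := by
    have hs : {A : Finset (Fin n) | Absorbing E m T A}
        = ((univ.filter (fun A => Absorbing E m T A) : Finset (Finset (Fin n))) : Set _) := by
      ext A
      simp
    rw [hs, Set.ncard_coe_finset]
  rw [hgoalset]
  set K : ℝ := ((univ.filter (fun A => Absorbing E m T A)).card : ℝ) with hK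
  have hNL : M ≤ m.factorial := by
    rw [hM, hm, hc]
    exact numeric_NL i hi
  have hMpos : 0 < M := by
    rw [hM]
    have h1 : 0 < m.choose c := Nat.choose_pos (by omega)
    have h2 : 0 < (m - c).choose c := Nat.choose_pos (by omega)
    have h3 : 0 < m ^ 3 := by positivity
    positivity
  have hchoose : (m.factorial : ℝ) * (n.choose m : ℝ) ≤ (n : ℝ) ^ m := by
    have h1 : m.factorial * n.choose m ≤ n ^ m := by
      rw [← Nat.descFactorial_eq_factorial_mul_choose]
      exact Nat.descFactorial_le_pow n m
    exact_mod_cast h1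
  have h2 : (η / 2) ^ 4 * (n : ℝ) ^ m ≤ (W.card : ℝ) := by
    have hids : (n : ℝ) ^ 3 * ((n : ℝ) ^ c * ((n : ℝ) ^ c * (n : ℝ) ^ c)) = (n : ℝ) ^ m := by
      rw [← pow_add, ← pow_add, ← pow_add]
      congr 1
      omega
    have hexp : (η / 2) ^ 4 * (n : ℝ) ^ m
        = (η / 2 * (n : ℝ) ^ 3) * (r * (r * r)) := by
      rw [hr, ← hids]
      ring
    rw [hexp]
    calc (η / 2 * (n : ℝ) ^ 3) * (r * (r * r)) ≤ (GoodX.card : ℝ) * (r * (r * r)) :=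
          mul_le_mul_of_nonneg_right hGoodXCard (by positivity)
    _ ≤ (W.card : ℝ) := hWcard
  have h1 : (W.card : ℝ) ≤ (M : ℝ) * K := by
    have himg : ((W.image gmap).card : ℝ) ≤ K := by
      rw [hK]
      exact_mod_cast card_le_card himgsub
    have hWleR : (W.card : ℝ) ≤ (M : ℝ) * ((W.image gmap).card : ℝ) := by exact_mod_cast hWle
    calc (W.card : ℝ) ≤ (M : ℝ) * ((W.image gmap).card : ℝ) := hWleR
    _ ≤ (M : ℝ) * K := mul_le_mul_of_nonneg_left himg (by positivity)
  have hMposR : (0 : ℝ) < (M : ℝ) := by exact_mod_cast hMpos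
  have hfinal : ((η / 2) ^ 4 * (n.choose m : ℝ)) * (M : ℝ) ≤ K * (M : ℝ) := by
    have hMleR : (M : ℝ) ≤ (m.factorial : ℝ) := by exact_mod_cast hNL
    calc ((η / 2) ^ 4 * (n.choose m : ℝ)) * (M : ℝ)
        ≤ ((η / 2) ^ 4 * (n.choose m : ℝ)) * (m.factorial : ℝ) :=
          mul_le_mul_of_nonneg_left hMleR (by positivity)
    _ = (η / 2) ^ 4 * ((m.factorial : ℝ) * (n.choose m : ℝ)) := by ring
    _ ≤ (η / 2) ^ 4 * (n : ℝ) ^ m := mul_le_mul_of_nonneg_left hchoose (by positivity)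
    _ ≤ (W.card : ℝ) := h2
    _ ≤ (M : ℝ) * K := h1
    _ = K * (M : ℝ) := by ring
  exact le_of_mul_le_mul_right hfinal hMposR
end

section
/- Let γ > 0 and ε > 0 be constants with ε < 3γ/4. Let H be a 3-graph of order n with δ2(H) ≥ (1/2 + γ)·n whose vertex set is partitioned into X and Y with |X| ≤ |Y|. Let x, x' ∈ X and y, y' ∈ Y be four distinct vertices such that all four 3-element subsets of {x, x', y, y'} are edges of H. Then at least one of the sets L({x,x',y}) ∩ X, L({x,x',y'}) ∩ X, L({x,y,y'}) ∩ Y, L({x',y,y'}) ∩ Y has size at least ε·n. -/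
open Finset

variable {V : Type*} [Fintype V] [DecidableEq V]

set_option linter.unusedSectionVars false in
lemma card3le (a b c : V) : ({a, b, c} : Finset V).card ≤ 3 := by
  apply le_trans (Finset.card_insert_le _ _)
  have := Finset.card_insert_le b ({c} : Finset V)
  simp at this ⊢
  omega

lemma card4_ne {s : Finset V} {a b c : V} (hs : s ⊆ {a, b, c}) (h : s.card = 4) : False := by
  have := (Finset.card_le_card hs).trans (card3le a b c)
  omega

lemma distinct_of_card4 {a b c d : V} (h : ({a, b, c, d} : Finset V).card = 4) :
    a ≠ b ∧ a ≠ c ∧ a ≠ d ∧ b ≠ c ∧ b ≠ d ∧ c ≠ d := by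
  refine ⟨?_, ?_, ?_, ?_, ?_, ?_⟩ <;> rintro rfl
  · exact card4_ne (show _ ⊆ ({a, c, d} : Finset V) by intro t ht; simp at ht ⊢; tauto) h
  · exact card4_ne (show _ ⊆ ({a, b, d} : Finset V) by intro t ht; simp at ht ⊢; tauto) h
  · exact card4_ne (show _ ⊆ ({a, b, c} : Finset V) by intro t ht; simp at ht ⊢; tauto) h
  · exact card4_ne (show _ ⊆ ({a, b, d} : Finset V) by intro t ht; simp at ht ⊢; tauto) h
  · exact card4_ne (show _ ⊆ ({a, b, c} : Finset V) by intro t ht; simp at ht ⊢; tauto) h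
  · exact card4_ne (show _ ⊆ ({a, b, c} : Finset V) by intro t ht; simp at ht ⊢; tauto) h

lemma not_dup1 {E : Finset (Finset V)} (hE : IsThreeGraph E) (u v : V) :
    ({u, v, u} : Finset V) ∉ E := by
  intro h
  have h3 := hE _ h
  have heq : ({u, v, u} : Finset V) = {u, v} := by ext a; simp; tauto
  rw [heq] at h3
  have : ({u, v} : Finset V).card ≤ 2 := by
    apply le_trans (Finset.card_insert_le _ _); simp
  omega

lemma not_dup2 {E : Finset (Finset V)} (hE : IsThreeGraph E) (u v : V) :
    ({u, v, v} : Finset V) ∉ E := by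
  intro h
  have h3 := hE _ h
  have heq : ({u, v, v} : Finset V) = {u, v} := by ext a; simp; try tauto
  rw [heq] at h3
  have : ({u, v} : Finset V).card ≤ 2 := by
    apply le_trans (Finset.card_insert_le _ _); simp
  omega

lemma three_le_filter {E : Finset (Finset V)} {U : Finset V} {e1 e2 e3 : Finset V}
    (h1 : e1 ∈ U.powersetCard 3) (h2 : e2 ∈ U.powersetCard 3) (h3 : e3 ∈ U.powersetCard 3)
    (m1 : e1 ∈ E) (m2 : e2 ∈ E) (m3 : e3 ∈ E)
    (n12 : e1 ≠ e2) (n13 : e1 ≠ e3) (n23 : e2 ≠ e3) :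
    3 ≤ ((U.powersetCard 3).filter (fun T => T ∈ E)).card := by
  have hsub : ({e1, e2, e3} : Finset (Finset V)) ⊆ (U.powersetCard 3).filter (fun T => T ∈ E) := by
    intro t ht
    simp only [mem_insert, mem_singleton] at ht
    rcases ht with rfl | rfl | rfl <;> simp [Finset.mem_filter, *]
  have hc : ({e1, e2, e3} : Finset (Finset V)).card = 3 := by
    rw [Finset.card_insert_of_notMem (by simp [n12, n13]),
      Finset.card_insert_of_notMem (by simp [n23]), Finset.card_singleton]
  calc 3 = ({e1, e2, e3} : Finset (Finset V)).card := hc.symm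
    _ ≤ _ := Finset.card_le_card hsub

lemma mem_Lset_two {E : Finset (Finset V)} (hE : IsThreeGraph E) {a b c w : V}
    (hab : a ≠ b) (hac : a ≠ c) (hbc : b ≠ c) (hwa : w ≠ a) (hwb : w ≠ b) (hwc : w ≠ c)
    (h0 : ({a, b, c} : Finset V) ∈ E)
    (h2 : 2 ≤ (if ({a, b, w} : Finset V) ∈ E then 1 else 0) +
      (if ({a, c, w} : Finset V) ∈ E then 1 else 0) +
      (if ({b, c, w} : Finset V) ∈ E then 1 else 0)) :
    w ∈ Lset E {a, b, c} := by
  have hwmem : w ∉ ({a, b, c} : Finset V) := by simp [hwa, hwb, hwc]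
  have hT3 : ({a, b, c} : Finset V).card = 3 := by
    rw [Finset.card_insert_of_notMem (by simp [hab, hac]),
      Finset.card_insert_of_notMem (by simp [hbc]), Finset.card_singleton]
  have hU4 : (insert w ({a, b, c} : Finset V)).card = 4 := by
    rw [Finset.card_insert_of_notMem hwmem, hT3]
  -- memberships in powersetCard 3
  have hPabc : ({a, b, c} : Finset V) ∈ (insert w ({a, b, c} : Finset V)).powersetCard 3 :=
    Finset.mem_powersetCard.mpr ⟨Finset.subset_insert _ _, hT3⟩
  have hPabw : ({a, b, w} : Finset V) ∈ (insert w ({a, b, c} : Finset V)).powersetCard 3 := by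
    refine Finset.mem_powersetCard.mpr ⟨by intro t ht; simp at ht ⊢; tauto, ?_⟩
    rw [Finset.card_insert_of_notMem (by simp [hab, hwa.symm]),
      Finset.card_insert_of_notMem (by simp [hwb.symm]), Finset.card_singleton]
  have hPacw : ({a, c, w} : Finset V) ∈ (insert w ({a, b, c} : Finset V)).powersetCard 3 := by
    refine Finset.mem_powersetCard.mpr ⟨by intro t ht; simp at ht ⊢; tauto, ?_⟩
    rw [Finset.card_insert_of_notMem (by simp [hac, hwa.symm]),
      Finset.card_insert_of_notMem (by simp [hwc.symm]), Finset.card_singleton]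
  have hPbcw : ({b, c, w} : Finset V) ∈ (insert w ({a, b, c} : Finset V)).powersetCard 3 := by
    refine Finset.mem_powersetCard.mpr ⟨by intro t ht; simp at ht ⊢; tauto, ?_⟩
    rw [Finset.card_insert_of_notMem (by simp [hbc, hwb.symm]),
      Finset.card_insert_of_notMem (by simp [hwc.symm]), Finset.card_singleton]
  -- inequalities between the triples
  have ne1 : ({a, b, c} : Finset V) ≠ {a, b, w} := by
    intro h
    have : w ∈ ({a, b, c} : Finset V) := by rw [h]; simp
    exact hwmem this
  have ne2 : ({a, b, c} : Finset V) ≠ {a, c, w} := by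
    intro h
    have : w ∈ ({a, b, c} : Finset V) := by rw [h]; simp
    exact hwmem this
  have ne3 : ({a, b, c} : Finset V) ≠ {b, c, w} := by
    intro h
    have : w ∈ ({a, b, c} : Finset V) := by rw [h]; simp
    exact hwmem this
  have ne4 : ({a, b, w} : Finset V) ≠ {a, c, w} := by
    intro h
    have hb : b ∈ ({a, c, w} : Finset V) := by rw [← h]; simp
    simp only [mem_insert, mem_singleton] at hb
    rcases hb with h' | h' | h'
    exacts [hab h'.symm, hbc h', hwb h'.symm]
  have ne5 : ({a, b, w} : Finset V) ≠ {b, c, w} := by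
    intro h
    have ha : a ∈ ({b, c, w} : Finset V) := by rw [← h]; simp
    simp only [mem_insert, mem_singleton] at ha
    rcases ha with h' | h' | h'
    exacts [hab h', hac h', hwa h'.symm]
  have ne6 : ({a, c, w} : Finset V) ≠ {b, c, w} := by
    intro h
    have ha : a ∈ ({b, c, w} : Finset V) := by rw [← h]; simp
    simp only [mem_insert, mem_singleton] at ha
    rcases ha with h' | h' | h'
    exacts [hab h', hac h', hwa h'.symm]
  refine ⟨hwmem, hU4, ?_⟩
  by_cases e1 : ({a, b, w} : Finset V) ∈ E <;> by_cases e2 : ({a, c, w} : Finset V) ∈ E <;>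
    by_cases e3 : ({b, c, w} : Finset V) ∈ E <;> simp [e1, e2, e3] at h2
  · exact three_le_filter hPabc hPabw hPacw h0 e1 e2 ne1 ne2 ne4
  · exact three_le_filter hPabc hPabw hPacw h0 e1 e2 ne1 ne2 ne4
  · exact three_le_filter hPabc hPabw hPbcw h0 e1 e3 ne1 ne3 ne5
  · exact three_le_filter hPabc hPacw hPbcw h0 e2 e3 ne2 ne3 ne6

/-- let `ε < 3γ/4`, let `H` have minimum codegree at least `(1/2+γ)n`, let
`V = X ∪ Y` be a partition with `|X| ≤ |Y|`, and let `x, x' ∈ X`, `y, y' ∈ Y` be four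
distinct vertices with all four triples of `{x,x',y,y'}` being edges. Then one of
`L(xx'y) ∩ X`, `L(xx'y') ∩ X`, `L(xyy') ∩ Y`, `L(x'yy') ∩ Y` has size at least `ε·n`. -/
theorem stmt_16 {V : Type*} [Fintype V] [DecidableEq V]
    (γ ε : ℝ) (hγ : 0 < γ) (hε : 0 < ε) (hεγ : ε < 3 * γ / 4)
    (E : Finset (Finset V)) (hE : IsThreeGraph E)
    (hdeg : ∀ u v : V, u ≠ v → (1 / 2 + γ) * (Fintype.card V : ℝ) ≤ (deg E u v : ℝ))
    (X Y : Finset V) (hXY : Disjoint X Y) (hU : X ∪ Y = Finset.univ)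
    (hcard : X.card ≤ Y.card)
    (x x' y y' : V) (hx : x ∈ X) (hx' : x' ∈ X) (hy : y ∈ Y) (hy' : y' ∈ Y)
    (hdistinct : ({x, x', y, y'} : Finset V).card = 4)
    (he1 : ({x, x', y} : Finset V) ∈ E) (he2 : ({x, x', y'} : Finset V) ∈ E)
    (he3 : ({x, y, y'} : Finset V) ∈ E) (he4 : ({x', y, y'} : Finset V) ∈ E) :
    ε * (Fintype.card V : ℝ) ≤ ((Lset E {x, x', y} ∩ (X : Set V)).ncard : ℝ) ∨
    ε * (Fintype.card V : ℝ) ≤ ((Lset E {x, x', y'} ∩ (X : Set V)).ncard : ℝ) ∨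
    ε * (Fintype.card V : ℝ) ≤ ((Lset E {x, y, y'} ∩ (Y : Set V)).ncard : ℝ) ∨
    ε * (Fintype.card V : ℝ) ≤ ((Lset E {x', y, y'} ∩ (Y : Set V)).ncard : ℝ) := by
  classical
  obtain ⟨hxx', hxy, hxy', hx'y, hx'y', hyy'⟩ := distinct_of_card4 hdistinct
  by_contra hcon
  push_neg at hcon
  obtain ⟨hc1, hc2, hc3, hc4⟩ := hcon
  set n := Fintype.card V with hn
  -- the four target finsets
  set F1 : Finset V := Finset.univ.filter (fun w => w ∈ Lset E {x, x', y} ∩ (X : Set V)) with hF1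
  set F2 : Finset V := Finset.univ.filter (fun w => w ∈ Lset E {x, x', y'} ∩ (X : Set V)) with hF2
  set F3 : Finset V := Finset.univ.filter (fun w => w ∈ Lset E {x, y, y'} ∩ (Y : Set V)) with hF3
  set F4 : Finset V := Finset.univ.filter (fun w => w ∈ Lset E {x', y, y'} ∩ (Y : Set V)) with hF4
  -- key pointwise inequality
  have key : ∀ w : V,
      2 * ((if ({x, x', w} : Finset V) ∈ E then 1 else 0) +
        (if ({x, y, w} : Finset V) ∈ E then 1 else 0) +
        (if ({x', y, w} : Finset V) ∈ E then 1 else 0) +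
        (if ({x, y', w} : Finset V) ∈ E then 1 else 0) +
        (if ({x', y', w} : Finset V) ∈ E then 1 else 0) +
        (if ({y, y', w} : Finset V) ∈ E then 1 else 0)) ≤
      6 + 3 * ((if w ∈ Lset E {x, x', y} ∩ (X : Set V) then 1 else 0) +
        (if w ∈ Lset E {x, x', y'} ∩ (X : Set V) then 1 else 0) +
        (if w ∈ Lset E {x, y, y'} ∩ (Y : Set V) then 1 else 0) +
        (if w ∈ Lset E {x', y, y'} ∩ (Y : Set V) then 1 else 0)) := by
    intro w
    have b2 : (if ({x, y, w} : Finset V) ∈ E then 1 else 0) ≤ 1 := by split <;> omega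
    have b3 : (if ({x', y, w} : Finset V) ∈ E then 1 else 0) ≤ 1 := by split <;> omega
    have b4 : (if ({x, y', w} : Finset V) ∈ E then 1 else 0) ≤ 1 := by split <;> omega
    have b5 : (if ({x', y', w} : Finset V) ∈ E then 1 else 0) ≤ 1 := by split <;> omega
    have b1 : (if ({x, x', w} : Finset V) ∈ E then 1 else 0) ≤ 1 := by split <;> omega
    have b6 : (if ({y, y', w} : Finset V) ∈ E then 1 else 0) ≤ 1 := by split <;> omega
    by_cases hwx : w = x
    · subst hwx
      rw [if_neg (not_dup1 hE w x'), if_neg (not_dup1 hE w y), if_neg (not_dup1 hE w y')]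
      omega
    by_cases hwx' : w = x'
    · subst hwx'
      rw [if_neg (not_dup2 hE x w), if_neg (not_dup1 hE w y), if_neg (not_dup1 hE w y')]
      omega
    by_cases hwy : w = y
    · subst hwy
      rw [if_neg (not_dup2 hE x w), if_neg (not_dup2 hE x' w), if_neg (not_dup1 hE w y')]
      omega
    by_cases hwy' : w = y'
    · subst hwy'
      rw [if_neg (not_dup2 hE x w), if_neg (not_dup2 hE x' w), if_neg (not_dup2 hE y w)]
      omega
    have hwXY : w ∈ X ∪ Y := hU ▸ Finset.mem_univ w
    rcases Finset.mem_union.mp hwXY with hwX | hwY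
    · -- w ∈ X : use L1 and L2
      have hA : 2 ≤ (if ({x, x', w} : Finset V) ∈ E then 1 else 0) +
          (if ({x, y, w} : Finset V) ∈ E then 1 else 0) +
          (if ({x', y, w} : Finset V) ∈ E then 1 else 0) →
          w ∈ Lset E {x, x', y} ∩ (X : Set V) := fun h =>
        ⟨mem_Lset_two hE hxx' hxy hx'y hwx hwx' hwy he1 h, hwX⟩
      have hB : 2 ≤ (if ({x, x', w} : Finset V) ∈ E then 1 else 0) +
          (if ({x, y', w} : Finset V) ∈ E then 1 else 0) +
          (if ({x', y', w} : Finset V) ∈ E then 1 else 0) →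
          w ∈ Lset E {x, x', y'} ∩ (X : Set V) := fun h =>
        ⟨mem_Lset_two hE hxx' hxy' hx'y' hwx hwx' hwy' he2 h, hwX⟩
      by_cases p1 : w ∈ Lset E {x, x', y} ∩ (X : Set V) <;>
        by_cases p2 : w ∈ Lset E {x, x', y'} ∩ (X : Set V)
      · rw [if_pos p1, if_pos p2]; omega
      · rw [if_pos p1, if_neg p2]
        have s2 : (if ({x, x', w} : Finset V) ∈ E then 1 else 0) +
            (if ({x, y', w} : Finset V) ∈ E then 1 else 0) +
            (if ({x', y', w} : Finset V) ∈ E then 1 else 0) ≤ 1 := by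
          by_contra hcontra; exact p2 (hB (by omega))
        omega
      · rw [if_neg p1, if_pos p2]
        have s1 : (if ({x, x', w} : Finset V) ∈ E then 1 else 0) +
            (if ({x, y, w} : Finset V) ∈ E then 1 else 0) +
            (if ({x', y, w} : Finset V) ∈ E then 1 else 0) ≤ 1 := by
          by_contra hcontra; exact p1 (hA (by omega))
        omega
      · rw [if_neg p1, if_neg p2]
        have s1 : (if ({x, x', w} : Finset V) ∈ E then 1 else 0) +
            (if ({x, y, w} : Finset V) ∈ E then 1 else 0) +
            (if ({x', y, w} : Finset V) ∈ E then 1 else 0) ≤ 1 := by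
          by_contra hcontra; exact p1 (hA (by omega))
        have s2 : (if ({x, x', w} : Finset V) ∈ E then 1 else 0) +
            (if ({x, y', w} : Finset V) ∈ E then 1 else 0) +
            (if ({x', y', w} : Finset V) ∈ E then 1 else 0) ≤ 1 := by
          by_contra hcontra; exact p2 (hB (by omega))
        omega
    · -- w ∈ Y : use L3 and L4
      have hC : 2 ≤ (if ({x, y, w} : Finset V) ∈ E then 1 else 0) +
          (if ({x, y', w} : Finset V) ∈ E then 1 else 0) +
          (if ({y, y', w} : Finset V) ∈ E then 1 else 0) →
          w ∈ Lset E {x, y, y'} ∩ (Y : Set V) := fun h =>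
        ⟨mem_Lset_two hE hxy hxy' hyy' hwx hwy hwy' he3 h, hwY⟩
      have hD : 2 ≤ (if ({x', y, w} : Finset V) ∈ E then 1 else 0) +
          (if ({x', y', w} : Finset V) ∈ E then 1 else 0) +
          (if ({y, y', w} : Finset V) ∈ E then 1 else 0) →
          w ∈ Lset E {x', y, y'} ∩ (Y : Set V) := fun h =>
        ⟨mem_Lset_two hE hx'y hx'y' hyy' hwx' hwy hwy' he4 h, hwY⟩
      by_cases p3 : w ∈ Lset E {x, y, y'} ∩ (Y : Set V) <;>
        by_cases p4 : w ∈ Lset E {x', y, y'} ∩ (Y : Set V)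
      · rw [if_pos p3, if_pos p4]; omega
      · rw [if_pos p3, if_neg p4]
        have s4 : (if ({x', y, w} : Finset V) ∈ E then 1 else 0) +
            (if ({x', y', w} : Finset V) ∈ E then 1 else 0) +
            (if ({y, y', w} : Finset V) ∈ E then 1 else 0) ≤ 1 := by
          by_contra hcontra; exact p4 (hD (by omega))
        omega
      · rw [if_neg p3, if_pos p4]
        have s3 : (if ({x, y, w} : Finset V) ∈ E then 1 else 0) +
            (if ({x, y', w} : Finset V) ∈ E then 1 else 0) +
            (if ({y, y', w} : Finset V) ∈ E then 1 else 0) ≤ 1 := by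
          by_contra hcontra; exact p3 (hC (by omega))
        omega
      · rw [if_neg p3, if_neg p4]
        have s3 : (if ({x, y, w} : Finset V) ∈ E then 1 else 0) +
            (if ({x, y', w} : Finset V) ∈ E then 1 else 0) +
            (if ({y, y', w} : Finset V) ∈ E then 1 else 0) ≤ 1 := by
          by_contra hcontra; exact p3 (hC (by omega))
        have s4 : (if ({x', y, w} : Finset V) ∈ E then 1 else 0) +
            (if ({x', y', w} : Finset V) ∈ E then 1 else 0) +
            (if ({y, y', w} : Finset V) ∈ E then 1 else 0) ≤ 1 := by
          by_contra hcontra; exact p4 (hD (by omega))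
        omega
  -- sum it up
  have hsum := Finset.sum_le_sum (fun w (_ : w ∈ Finset.univ) => key w)
  have hdsum : ∀ u v : V, (Finset.univ.filter fun w => ({u, v, w} : Finset V) ∈ E).card
      = ∑ w : V, (if ({u, v, w} : Finset V) ∈ E then 1 else 0) := by
    intro u v; exact Finset.card_filter _ _
  have hLHS : ∑ w : V, (2 * ((if ({x, x', w} : Finset V) ∈ E then 1 else 0) +
        (if ({x, y, w} : Finset V) ∈ E then 1 else 0) +
        (if ({x', y, w} : Finset V) ∈ E then 1 else 0) +
        (if ({x, y', w} : Finset V) ∈ E then 1 else 0) +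
        (if ({x', y', w} : Finset V) ∈ E then 1 else 0) +
        (if ({y, y', w} : Finset V) ∈ E then 1 else 0)))
      = 2 * (deg E x x' + deg E x y + deg E x' y + deg E x y' + deg E x' y' + deg E y y') := by
    rw [← Finset.mul_sum]
    simp only [Finset.sum_add_distrib]
    rw [deg, deg, deg, deg, deg, deg, hdsum, hdsum, hdsum, hdsum, hdsum, hdsum]
  have hRHS : ∑ w : V, (6 + 3 * ((if w ∈ Lset E {x, x', y} ∩ (X : Set V) then 1 else 0) +
        (if w ∈ Lset E {x, x', y'} ∩ (X : Set V) then 1 else 0) +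
        (if w ∈ Lset E {x, y, y'} ∩ (Y : Set V) then 1 else 0) +
        (if w ∈ Lset E {x', y, y'} ∩ (Y : Set V) then 1 else 0)))
      = 6 * n + 3 * (F1.card + F2.card + F3.card + F4.card) := by
    rw [Finset.sum_add_distrib, ← Finset.mul_sum]
    simp only [Finset.sum_add_distrib]
    rw [hF1, hF2, hF3, hF4, Finset.card_filter, Finset.card_filter, Finset.card_filter,
      Finset.card_filter]
    simp [hn, Finset.card_univ, mul_comm]
  rw [hLHS, hRHS] at hsum
  -- convert the ncard statements
  have eq1 : (Lset E {x, x', y} ∩ (X : Set V)).ncard = F1.card := by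
    rw [show Lset E {x, x', y} ∩ (X : Set V) = ↑F1 by ext w; simp [hF1], Set.ncard_coe_finset]
  have eq2 : (Lset E {x, x', y'} ∩ (X : Set V)).ncard = F2.card := by
    rw [show Lset E {x, x', y'} ∩ (X : Set V) = ↑F2 by ext w; simp [hF2], Set.ncard_coe_finset]
  have eq3 : (Lset E {x, y, y'} ∩ (Y : Set V)).ncard = F3.card := by
    rw [show Lset E {x, y, y'} ∩ (Y : Set V) = ↑F3 by ext w; simp [hF3], Set.ncard_coe_finset]
  have eq4 : (Lset E {x', y, y'} ∩ (Y : Set V)).ncard = F4.card := by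
    rw [show Lset E {x', y, y'} ∩ (Y : Set V) = ↑F4 by ext w; simp [hF4], Set.ncard_coe_finset]
  rw [eq1] at hc1; rw [eq2] at hc2; rw [eq3] at hc3; rw [eq4] at hc4
  -- real arithmetic
  have hnpos : (0 : ℝ) < n := by
    have : 0 < n := Fintype.card_pos_iff.mpr ⟨x⟩
    exact_mod_cast this
  have d1 := hdeg x x' hxx'
  have d2 := hdeg x y hxy
  have d3 := hdeg x' y hx'y
  have d4 := hdeg x y' hxy'
  have d5 := hdeg x' y' hx'y'
  have d6 := hdeg y y' hyy'
  have hsumR : (2 : ℝ) * ((deg E x x' : ℝ) + deg E x y + deg E x' y + deg E x y' +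
      deg E x' y' + deg E y y') ≤ 6 * n + 3 * ((F1.card : ℝ) + F2.card + F3.card + F4.card) := by
    exact_mod_cast hsum
  have hεn : ε * (n : ℝ) < (3 * γ / 4) * n := mul_lt_mul_of_pos_right hεγ hnpos
  have hγn : (0 : ℝ) < γ * n := mul_pos hγ hnpos
  nlinarith [d1, d2, d3, d4, d5, d6, hc1, hc2, hc3, hc4, hsumR, hεn, hγn]
end

section
/- Let A and B be disjoint finite sets with |A| = a and |B| = b, and let H_{a,b} be the corresponding 3-graph. Then every 4-element vertex set that spans a copy of K4^- in H_{a,b} contains exactly 0 or exactly 3 vertices of A. Consequently, if a is not divisible by 3, then H_{a,b} has no K4^--factor. -/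
open Finset

variable {V : Type*} [Fintype V] [DecidableEq V]

/-- `H_{a,b}`: the 3-graph on `A ∪ B` whose edges are exactly the 3-element vertex sets
containing an odd number of vertices of `B`. -/
def Hab (A B : Finset V) : Finset (Finset V) :=
  (Finset.univ.powersetCard 3).filter fun e => (e ∩ B).card % 2 = 1

/-- in `H_{a,b}`, every 4-element vertex set spanning a copy of `K₄⁻` contains
exactly 0 or exactly 3 vertices of `A`; consequently, if `3 ∤ a` then `H_{a,b}` has no
`K₄⁻`-factor. -/
theorem stmt_18 {V : Type*} [Fintype V] [DecidableEq V]
    (A B : Finset V) (a b : ℕ) (hA : A.card = a) (hB : B.card = b)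
    (hd : Disjoint A B) (hu : A ∪ B = Finset.univ) :
    (∀ U : Finset V, SpansK4m (Hab A B) U → (U ∩ A).card = 0 ∨ (U ∩ A).card = 3) ∧
    (¬ (3 ∣ a) → ¬ HasK4mFactor (Hab A B)) := by
  have key : ∀ U : Finset V, SpansK4m (Hab A B) U → (U ∩ A).card = 0 ∨ (U ∩ A).card = 3 := by
    intro U h
    obtain ⟨hU4, hU3⟩ := h
    have hpart : ∀ T : Finset V, (T ∩ A).card + (T ∩ B).card = T.card := by
      intro T
      have hdT : Disjoint (T ∩ A) (T ∩ B) :=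
        hd.mono Finset.inter_subset_right Finset.inter_subset_right
      rw [← Finset.card_union_of_disjoint hdT, ← Finset.inter_union_distrib_left, hu,
        Finset.inter_univ]
    have hmem : ∀ T : Finset V, T.card = 3 → (T ∈ Hab A B ↔ (T ∩ A).card % 2 = 0) := by
      intro T h3
      have := hpart T
      simp only [Hab, Finset.mem_filter, Finset.mem_powersetCard, Finset.subset_univ, true_and, h3]
      omega
    set k := (U ∩ A).card with hk
    have hkle : k ≤ 4 := hU4 ▸ Finset.card_le_card (Finset.inter_subset_left)
    have hcount : ((U.powersetCard 3).filter (fun T => T ∈ Hab A B)).card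
        = (U.filter fun v => ((U.erase v) ∩ A).card % 2 = 0).card := by
      symm
      apply Finset.card_bij (fun v _ => U.erase v)
      · intro v hv
        rw [Finset.mem_filter] at hv
        rw [Finset.mem_filter, Finset.mem_powersetCard]
        have hc : (U.erase v).card = 3 := by
          rw [Finset.card_erase_of_mem hv.1, hU4]
        exact ⟨⟨Finset.erase_subset _ _, hc⟩, (hmem _ hc).2 hv.2⟩
      · intro v hv w hw hvw
        rw [Finset.mem_filter] at hv hw
        by_contra hne
        exact (Finset.notMem_erase v U) (hvw ▸ Finset.mem_erase.2 ⟨hne, hv.1⟩)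
      · intro T hT
        rw [Finset.mem_filter, Finset.mem_powersetCard] at hT
        obtain ⟨⟨hTU, hT3⟩, hTE⟩ := hT
        have hne : T ≠ U := by intro h; rw [h, hU4] at hT3; omega
        obtain ⟨v, hvU, hvT⟩ := Finset.exists_of_ssubset (hTU.ssubset_of_ne hne)
        have hTe : U.erase v = T := by
          symm
          apply Finset.eq_of_subset_of_card_le
          · intro x hx
            exact Finset.mem_erase.2 ⟨fun h => hvT (h ▸ hx), hTU hx⟩
          · rw [Finset.card_erase_of_mem hvU, hU4, hT3]
        refine ⟨v, Finset.mem_filter.2 ⟨hvU, ?_⟩, hTe⟩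
        rw [hTe]
        exact (hmem T hT3).1 hTE
    have herase : ∀ v ∈ U, ((U.erase v) ∩ A).card = if v ∈ A then k - 1 else k := by
      intro v hv
      have : (U.erase v) ∩ A = (U ∩ A).erase v := by
        ext x; simp only [Finset.mem_inter, Finset.mem_erase]; tauto
      rw [this]
      split
      · next h => rw [Finset.card_erase_of_mem (Finset.mem_inter.2 ⟨hv, h⟩)]
      · next h => rw [Finset.erase_eq_of_notMem (fun hc => h (Finset.mem_inter.1 hc).2)]
    rw [hcount] at hU3
    rcases Nat.even_or_odd k with hke | hko
    · left
      have hk2 : k % 2 = 0 := Nat.even_iff.1 hke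
      have heq : (U.filter fun v => ((U.erase v) ∩ A).card % 2 = 0)
          = U.filter (fun v => v ∉ A) := by
        apply Finset.filter_congr
        intro v hv
        rw [herase v hv]
        have hk1 : v ∈ A → 1 ≤ k := fun h =>
          Finset.card_pos.2 ⟨v, Finset.mem_inter.2 ⟨hv, h⟩⟩
        rcases em (v ∈ A) with hvA | hvA
        · rw [if_pos hvA]
          simp only [hvA, not_true, iff_false]
          have := hk1 hvA; omega
        · rw [if_neg hvA]
          simp only [hvA, not_false_iff, iff_true]
          omega
      rw [heq] at hU3
      have h1 : (U.filter (fun v => v ∈ A)).card + (U.filter (fun v => ¬ v ∈ A)).card = U.card :=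
        Finset.card_filter_add_card_filter_not _
      have h2 : U.filter (fun v => v ∈ A) = U ∩ A := Finset.filter_mem_eq_inter
      rw [h2, hU4] at h1
      omega
    · right
      have hk2 : k % 2 = 1 := Nat.odd_iff.1 hko
      have heq : (U.filter fun v => ((U.erase v) ∩ A).card % 2 = 0)
          = U.filter (fun v => v ∈ A) := by
        apply Finset.filter_congr
        intro v hv
        rcases em (v ∈ A) with hvA | hvA
        · rw [herase v hv, if_pos hvA]
          simp only [hvA, iff_true]
          omega
        · rw [herase v hv, if_neg hvA]
          simp only [hvA, iff_false]
          omega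
      rw [heq, Finset.filter_mem_eq_inter, ← hk] at hU3
      omega
  refine ⟨key, ?_⟩
  rintro h3 ⟨P, hP1, hP2⟩
  apply h3
  have hdisj : ∀ U₁ ∈ P, ∀ U₂ ∈ P, U₁ ≠ U₂ → Disjoint (U₁ ∩ A) (U₂ ∩ A) := by
    intro U₁ h1 U₂ h2 hne
    refine Finset.disjoint_left.2 fun v hv1 hv2 => hne ?_
    have hv1' := Finset.mem_inter.1 hv1
    have hv2' := Finset.mem_inter.1 hv2
    exact (hP2 v (Finset.mem_univ v)).unique ⟨h1, hv1'.1⟩ ⟨h2, hv2'.1⟩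
  have hAeq : A = P.biUnion (fun U => U ∩ A) := by
    ext v
    simp only [Finset.mem_biUnion, Finset.mem_inter]
    constructor
    · intro hv
      obtain ⟨U, ⟨hUP, hvU⟩, -⟩ := hP2 v (Finset.mem_univ v)
      exact ⟨U, hUP, hvU, hv⟩
    · rintro ⟨U, -, -, hv⟩
      exact hv
  rw [← hA, hAeq, Finset.card_biUnion hdisj]
  refine Finset.dvd_sum fun U hU => ?_
  rcases key U (hP1 U hU).2 with h | h <;> simp [h]
end
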